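/- arXiv:2603.09375 — 14 statements merged into one kernel-verified Lean document; each statement's English description precedes it below -/
import Mathlib

section
/- If f : X → X is a surjective equicontinuous continuous map on a compact metric space, then f is a homeomorphism and f⁻¹ is also equicontinuous. -/
open Metric Filter Function Set

variable {X : Type*} [MetricSpace X]

/-- A δ-chain of length ≥ 1 from x to y. -/
def IsChain' (f : X → X) (δ : ℝ) (x y : X) : Prop :=
  ∃ k : ℕ, 1 ≤ k ∧ ∃ c : ℕ → X, c 0 = x ∧ c k = y ∧ ∀ i < k, dist (f (c i)) (c (i + 1)) ≤ δ

/-- The chain recurrent set. -/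
def CR (f : X → X) : Set X := {x | ∀ δ > 0, IsChain' f δ x x}

/-- Sensitive points of f restricted to S. -/
def SenOn (f : X → X) (S : Set X) : Set X :=
  {x | x ∈ S ∧ ∃ a > 0, ∀ δ > 0, ∃ y ∈ S, dist x y ≤ δ ∧ ∃ i : ℕ, a < dist (f^[i] x) (f^[i] y)}

/-- Equicontinuity of a map (uniform over all forward iterates). -/
def Equicont (f : X → X) : Prop :=
  ∀ ε > 0, ∃ δ > 0, ∀ z w : X, dist z w ≤ δ → ∀ i : ℕ, dist (f^[i] z) (f^[i] w) ≤ ε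

/-- The i-th iterate (i ∈ ℤ) of a homeomorphism. -/
def ziter (f : X ≃ₜ X) (i : ℤ) : X → X :=
  fun x => if 0 ≤ i then (⇑f)^[i.toNat] x else (⇑f.symm)^[(-i).toNat] x

/-- Expansiveness of a homeomorphism. -/
def Expansive (f : X ≃ₜ X) : Prop :=
  ∃ e > 0, ∀ x y : X, (∀ i : ℤ, dist (ziter f i x) (ziter f i y) ≤ e) → x = y

/-- e is an expansive constant for f on S. -/
def ExpConstOn (f : X ≃ₜ X) (S : Set X) (e : ℝ) : Prop :=
  ∀ x y : X, (∀ i : ℤ, ziter f i x ∈ S) → (∀ i : ℤ, ziter f i y ∈ S) →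
    (∀ i : ℤ, dist (ziter f i x) (ziter f i y) ≤ e) → x = y

/-- Periodic points. -/
def Per (f : X → X) : Set X := {x | ∃ j : ℕ, 1 ≤ j ∧ f^[j] x = x}

/-- Closed r-neighborhood of a set. -/
def nbd (r : ℝ) (S : Set X) : Set X := {y | infDist y S ≤ r}

theorem stmt_0 [CompactSpace X] (f : X → X) (hc : Continuous f) (hs : Function.Surjective f)
    (he : Equicont f) :
    ∃ g : X ≃ₜ X, (∀ x, g x = f x) ∧ Equicont ⇑g.symm := by
  classical
  -- backward chains: u 0 = x and f^[i] (u (i+n)) = u n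
  have gen : ∀ (u : ℕ → X), (∀ n, f (u (n + 1)) = u n) → ∀ i n : ℕ, f^[i] (u (i + n)) = u n := by
    intro u hstep i
    induction i with
    | zero => intro n; simp
    | succ i ih =>
      intro n
      have h1 : (i + 1 + n) = (i + n) + 1 := by omega
      rw [h1, Function.iterate_succ_apply, hstep, ih]
  have chain : ∀ x : X, ∃ u : ℕ → X, u 0 = x ∧ ∀ i n : ℕ, f^[i] (u (i + n)) = u n := by
    intro x
    refine ⟨fun n => Nat.rec x (fun _ ih => Classical.choose (hs ih)) n, rfl, ?_⟩
    exact gen _ (fun n => Classical.choose_spec (hs _))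
  -- pigeonhole on a pair of sequences in a compact space
  have pigeon : ∀ (u v : ℕ → X) (δ : ℝ), 0 < δ →
      ∃ m n : ℕ, m < n ∧ dist (u m) (u n) ≤ δ ∧ dist (v m) (v n) ≤ δ := by
    intro u v δ hδ
    obtain ⟨q, -, φ, hφ, hconv⟩ :=
      isCompact_univ.tendsto_subseq (x := fun n => ((u n, v n) : X × X)) (fun n => Set.mem_univ _)
    obtain ⟨N, hN⟩ := (Metric.tendsto_atTop.1 hconv) (δ/2) (by linarith)
    have hd : dist ((u (φ N), v (φ N)) : X × X) ((u (φ (N+1)), v (φ (N+1)))) ≤ δ := by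
      have h1 := hN N le_rfl
      have h2 := hN (N+1) (Nat.le_succ N)
      calc dist ((u (φ N), v (φ N)) : X × X) ((u (φ (N+1)), v (φ (N+1))))
          ≤ dist ((u (φ N), v (φ N)) : X × X) q + dist q ((u (φ (N+1)), v (φ (N+1)))) :=
            dist_triangle _ _ _
        _ ≤ δ/2 + δ/2 := by
            refine add_le_add (le_of_lt h1) ?_
            rw [dist_comm]; exact le_of_lt h2
        _ = δ := by ring
    refine ⟨φ N, φ (N+1), hφ (Nat.lt_succ_self N), ?_, ?_⟩
    · rw [Prod.dist_eq] at hd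
      exact le_trans (le_max_left _ _) hd
    · rw [Prod.dist_eq] at hd
      exact le_trans (le_max_right _ _) hd
  -- key lemma: if all iterates j ≥ 1 are within c, so is iterate 0 (and all)
  have key : ∀ (c : ℝ) (x y : X), (∀ j, 1 ≤ j → dist (f^[j] x) (f^[j] y) ≤ c) →
      ∀ j, dist (f^[j] x) (f^[j] y) ≤ c := by
    intro c x y h j
    refine le_of_forall_pos_le_add ?_
    intro ε hε
    obtain ⟨δ, hδ, hδε⟩ := he (ε/2) (by linarith)
    obtain ⟨u, hu0, hui⟩ := chain x
    obtain ⟨v, hv0, hvi⟩ := chain y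
    obtain ⟨m, n, hmn, hum, hvm⟩ := pigeon u v δ hδ
    have hux : f^[n] (u n) = x := by simpa [hu0] using hui n 0
    have hvy : f^[n] (v n) = y := by simpa [hv0] using hvi n 0
    have humx : f^[m] (u m) = x := by simpa [hu0] using hui m 0
    have hvmy : f^[m] (v m) = y := by simpa [hv0] using hvi m 0
    set k := n - m with hk
    have hk1 : 1 ≤ k := by omega
    have e1 : f^[n + j] (u n) = f^[j] x := by
      rw [add_comm, Function.iterate_add_apply, hux]
    have e2 : f^[n + j] (u m) = f^[j + k] x := by
      have : n + j = (j + k) + m := by omega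
      rw [this, Function.iterate_add_apply, humx]
    have e3 : f^[n + j] (v n) = f^[j] y := by
      rw [add_comm, Function.iterate_add_apply, hvy]
    have e4 : f^[n + j] (v m) = f^[j + k] y := by
      have : n + j = (j + k) + m := by omega
      rw [this, Function.iterate_add_apply, hvmy]
    have hx : dist (f^[j] x) (f^[j + k] x) ≤ ε/2 := by
      have := hδε (u n) (u m) (by rw [dist_comm]; exact hum) (n + j)
      rwa [e1, e2] at this
    have hy : dist (f^[j + k] y) (f^[j] y) ≤ ε/2 := by
      have := hδε (v m) (v n) hvm (n + j)
      rwa [e3, e4] at this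
    have hmid : dist (f^[j + k] x) (f^[j + k] y) ≤ c := h (j + k) (by omega)
    calc dist (f^[j] x) (f^[j] y)
        ≤ dist (f^[j] x) (f^[j + k] x) + dist (f^[j + k] x) (f^[j + k] y)
            + dist (f^[j + k] y) (f^[j] y) := dist_triangle4 _ _ _ _
      _ ≤ ε/2 + c + ε/2 := by linarith
      _ = c + ε := by ring
  -- injectivity
  have hinj : Function.Injective f := by
    intro a b hab
    have h : ∀ j, 1 ≤ j → dist (f^[j] a) (f^[j] b) ≤ 0 := by
      intro j hj
      obtain ⟨j', rfl⟩ : ∃ j', j = j' + 1 := ⟨j - 1, by omega⟩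
      rw [Function.iterate_succ_apply, Function.iterate_succ_apply, hab]
      simp
    have := key 0 a b h 0
    simpa [dist_le_zero] using this
  -- iterated version of the key lemma
  have keyiter : ∀ (c : ℝ) (i : ℕ) (x y : X), (∀ j, dist (f^[i + j] x) (f^[i + j] y) ≤ c) →
      ∀ j, dist (f^[j] x) (f^[j] y) ≤ c := by
    intro c i
    induction i with
    | zero => intro x y h j; simpa using h j
    | succ i ih =>
      intro x y h
      apply ih
      intro j
      rw [add_comm i j, Function.iterate_add_apply, Function.iterate_add_apply]
      apply key c (f^[i] x) (f^[i] y)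
      intro j' hj'
      obtain ⟨j'', rfl⟩ : ∃ j'', j' = j'' + 1 := ⟨j' - 1, by omega⟩
      rw [← Function.iterate_add_apply, ← Function.iterate_add_apply]
      have : j'' + 1 + i = (i + 1) + j'' := by omega
      rw [this]
      exact h j''
  -- build the homeomorphism
  let e : X ≃ X := Equiv.ofBijective f ⟨hinj, hs⟩
  have hce : Continuous e := hc
  let g : X ≃ₜ X := hce.homeoOfEquivCompactToT2
  have hg : ∀ x, g x = f x := fun x => rfl
  have hginv : ∀ i (z : X), f^[i] ((⇑g.symm)^[i] z) = z := by
    intro i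
    induction i with
    | zero => intro z; rfl
    | succ i ih =>
      intro z
      rw [Function.iterate_succ_apply' (⇑g.symm), Function.iterate_succ_apply f]
      have : f (g.symm ((⇑g.symm)^[i] z)) = (⇑g.symm)^[i] z := by
        rw [← hg]; exact g.apply_symm_apply _
      rw [this]; exact ih z
  refine ⟨g, hg, ?_⟩
  intro ε hε
  obtain ⟨δ, hδ, hδε⟩ := he ε hε
  refine ⟨δ, hδ, fun z w hzw i => ?_⟩
  have h : ∀ j, dist (f^[i + j] ((⇑g.symm)^[i] z)) (f^[i + j] ((⇑g.symm)^[i] w)) ≤ ε := by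
    intro j
    rw [add_comm, Function.iterate_add_apply, Function.iterate_add_apply, hginv, hginv]
    exact hδε z w hzw j
  simpa using keyiter ε i _ _ h 0
end

section
/- A continuous map f : X → X on a compact metric space is equicontinuous if and only if Sen(f) = ∅, where Sen(f) is the set of sensitive points of f. -/
open Metric Filter Function Set

variable {X : Type*} [MetricSpace X]

theorem stmt_1 [CompactSpace X] (f : X → X) (hc : Continuous f) :
    Equicont f ↔ SenOn f Set.univ = ∅ := by
  constructor
  · intro he
    ext x
    simp only [SenOn, mem_setOf_eq, mem_empty_iff_false, iff_false, not_and, mem_univ, true_and]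
    push_neg
    intro a ha
    obtain ⟨δ, hδ, hδ'⟩ := he a ha
    exact ⟨δ, hδ, fun y hy i => hδ' x y hy i⟩
  · intro h ε hε
    have key : ∀ x : X, ∃ δ > 0, ∀ y, dist x y ≤ δ → ∀ i, dist (f^[i] x) (f^[i] y) ≤ ε / 2 := by
      intro x
      have hx : x ∉ SenOn f Set.univ := by rw [h]; exact notMem_empty x
      simp only [SenOn, mem_setOf_eq, mem_univ, true_and] at hx
      push_neg at hx
      exact hx (ε / 2) (by linarith)
    choose δ hδpos hδ using key
    by_cases hne : Nonempty X
    · obtain ⟨t, ht⟩ := (isCompact_univ (X := X)).elim_finite_subcover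
        (fun x => ball x (δ x / 2)) (fun x => isOpen_ball)
        (fun x _ => mem_iUnion.2 ⟨x, mem_ball_self (by linarith [hδpos x])⟩)
      have htne : t.Nonempty := by
        obtain ⟨x⟩ := hne
        have hx := ht (mem_univ x)
        simp only [mem_iUnion, exists_prop] at hx
        obtain ⟨y, hy, _⟩ := hx
        exact ⟨y, hy⟩
      refine ⟨t.inf' htne (fun x => δ x / 2), ?_, ?_⟩
      · exact (Finset.lt_inf'_iff _).2 fun b hb => by linarith [hδpos b]
      · intro z w hzw i
        have hz := ht (mem_univ z)
        simp only [mem_iUnion, exists_prop] at hz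
        obtain ⟨x0, hx0t, hx0⟩ := hz
        rw [mem_ball, dist_comm] at hx0
        have hle : t.inf' htne (fun x => δ x / 2) ≤ δ x0 / 2 := Finset.inf'_le _ hx0t
        have h1 : dist x0 z ≤ δ x0 := by linarith [hδpos x0]
        have h2 : dist x0 w ≤ δ x0 := by
          have := dist_triangle x0 z w
          linarith [hδpos x0]
        calc dist (f^[i] z) (f^[i] w)
            ≤ dist (f^[i] z) (f^[i] x0) + dist (f^[i] x0) (f^[i] w) := dist_triangle _ _ _
          _ ≤ ε / 2 + ε / 2 := by
              gcongr
              · rw [dist_comm]; exact hδ x0 z h1 i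
              · exact hδ x0 w h2 i
          _ = ε := by ring
    · exact ⟨1, one_pos, fun z => (hne ⟨z⟩).elim⟩
end

section
/- For an expansive homeomorphism f : X → X of a compact metric space, if the restriction of f to the chain recurrent set CR(f) has no sensitive points, then CR(f) is a finite set. -/
open Metric Filter Function Set

variable {X : Type*} [MetricSpace X]

section A
variable [CompactSpace X]

lemma ucont (g : X → X) (hg : Continuous g) {ε : ℝ} (hε : 0 < ε) :
    ∃ δ > 0, ∀ a b : X, dist a b ≤ δ → dist (g a) (g b) ≤ ε := by
  have h := CompactSpace.uniformContinuous_of_continuous hg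
  rcases Metric.uniformContinuous_iff.mp h ε hε with ⟨δ, hδ, h⟩
  exact ⟨δ/2, by positivity, fun a b hab => le_of_lt (h (lt_of_le_of_lt hab (by linarith)))⟩

lemma isClosed_CR (g : X → X) (hg : Continuous g) : IsClosed (CR g) := by
  rw [← isOpen_compl_iff, Metric.isOpen_iff]
  intro x hx
  have hx' : ¬ ∀ δ > (0:ℝ), IsChain' g δ x x := hx
  push_neg at hx'
  obtain ⟨δ₀, hδ₀, hno⟩ := hx'
  set δ : ℝ := δ₀/3 with hδdef
  have hδ : 0 < δ := by positivity
  obtain ⟨η, hη, hcont⟩ := ucont g hg hδ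
  refine ⟨min η δ, by positivity, fun x' hx' => ?_⟩
  intro hx'CR
  apply hno
  have hd : dist x x' ≤ min η δ := by
    rw [dist_comm]; exact le_of_lt (by simpa [Metric.mem_ball] using hx')
  obtain ⟨k, hk, c, hc0, hck, hstep⟩ := hx'CR (min η δ) (by positivity)
  refine ⟨k, hk, fun i => if i = 0 ∨ i = k then x else c i, by simp, by simp, ?_⟩
  intro i hi
  have hηδ : min η δ ≤ η := min_le_left _ _
  have hδδ : min η δ ≤ δ := min_le_right _ _
  have hgx : dist (g x) (g x') ≤ δ := hcont x x' (hd.trans hηδ)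
  by_cases hi0 : i = 0
  · subst hi0
    by_cases h1k : 1 = k
    · simp only [if_pos (Or.inl rfl)]
      have : (if (1:ℕ) = 0 ∨ 1 = k then x else c 1) = x := by simp [h1k]
      rw [this]
      have h1 : dist (g (c 0)) (c 1) ≤ min η δ := hstep 0 hi
      have h2 : dist (c 1) x ≤ δ := by
        have : c 1 = x' := h1k ▸ hck
        rw [this, dist_comm]
        exact hd.trans hδδ
      calc dist (g x) x ≤ dist (g x) (g x') + dist (g x') (c 1) + dist (c 1) x :=
            dist_triangle4 _ _ _ _
        _ ≤ δ + min η δ + δ := by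
            refine add_le_add (add_le_add hgx ?_) h2
            rw [← hc0]; exact h1
        _ ≤ δ₀ := by rw [hδdef] at *; linarith [hδδ]
    · have hne : ¬((1:ℕ) = 0 ∨ 1 = k) := by push_neg; exact ⟨one_ne_zero, h1k⟩
      simp only [if_pos (Or.inl rfl), if_neg hne]
      have h1 : dist (g (c 0)) (c 1) ≤ min η δ := hstep 0 hi
      calc dist (g x) (c 1) ≤ dist (g x) (g x') + dist (g x') (c 1) := dist_triangle _ _ _
        _ ≤ δ + min η δ := by refine add_le_add hgx ?_; rw [← hc0]; exact h1
        _ ≤ δ₀ := by rw [hδdef] at *; linarith [hδδ]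
  · have hik : i ≠ k := Nat.ne_of_lt hi
    have hne : ¬(i = 0 ∨ i = k) := by push_neg; exact ⟨hi0, hik⟩
    simp only [if_neg hne]
    by_cases hik1 : i + 1 = k
    · have : (if i + 1 = 0 ∨ i + 1 = k then x else c (i+1)) = x := by simp [hik1]
      rw [this]
      have h1 : dist (g (c i)) (c (i+1)) ≤ min η δ := hstep i hi
      calc dist (g (c i)) x ≤ dist (g (c i)) (c (i+1)) + dist (c (i+1)) x :=
            dist_triangle _ _ _
        _ ≤ min η δ + δ := by
            refine add_le_add h1 ?_
            have : c (i+1) = x' := hik1 ▸ hck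
            rw [this, dist_comm]; exact hd.trans hδδ
        _ ≤ δ₀ := by rw [hδdef] at *; linarith [hδδ]
    · have hne2 : ¬(i + 1 = 0 ∨ i + 1 = k) := by push_neg; exact ⟨Nat.succ_ne_zero i, hik1⟩
      simp only [if_neg hne2]
      exact (hstep i hi).trans (hδδ.trans (by rw [hδdef]; linarith))

lemma CR_map (g : X → X) (hg : Continuous g) {x : X} (hx : x ∈ CR g) : g x ∈ CR g := by
  intro δ hδ
  obtain ⟨η, hη, hcont⟩ := ucont g hg hδ
  obtain ⟨k, hk, c, hc0, hck, hstep⟩ := hx η hη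
  exact ⟨k, hk, g ∘ c, by simp [hc0], by simp [hck],
    fun i hi => hcont _ _ (hstep i hi)⟩

lemma CR_symm (f : X ≃ₜ X) {x : X} (hx : x ∈ CR ⇑f) : f.symm x ∈ CR ⇑f := by
  intro δ hδ
  obtain ⟨η, hη, hcont⟩ := ucont ⇑f.symm f.symm.continuous hδ
  obtain ⟨k, hk, c, hc0, hck, hstep⟩ := hx η hη
  refine ⟨k, hk, ⇑f.symm ∘ c, by simp [hc0], by simp [hck], fun i hi => ?_⟩
  have h := hcont _ _ (hstep i hi)
  simpa [f.symm_apply_apply] using h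

lemma CR_symm_iter (f : X ≃ₜ X) (n : ℕ) {x : X} (hx : x ∈ CR ⇑f) :
    (⇑f.symm)^[n] x ∈ CR ⇑f := by
  induction n with
  | zero => simpa using hx
  | succ n ih => rw [Function.iterate_succ_apply']; exact CR_symm f ih

end A

section B
variable [CompactSpace X]

noncomputable def Dsup (g : X → X) (x y : X) : ℝ := ⨆ i : ℕ, dist (g^[i] x) (g^[i] y)

lemma Dsup_bdd (g : X → X) (x y : X) :
    BddAbove (range fun i : ℕ => dist (g^[i] x) (g^[i] y)) := by
  refine ⟨diam (univ : Set X), ?_⟩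
  rintro r ⟨i, rfl⟩
  exact dist_le_diam_of_mem isCompact_univ.isBounded (mem_univ _) (mem_univ _)

lemma dist_le_Dsup (g : X → X) (x y : X) (i : ℕ) :
    dist (g^[i] x) (g^[i] y) ≤ Dsup g x y :=
  le_ciSup (Dsup_bdd g x y) i

lemma dist_le_Dsup₀ (g : X → X) (x y : X) : dist x y ≤ Dsup g x y := by
  simpa using dist_le_Dsup g x y 0

lemma Dsup_le (g : X → X) {x y : X} {a : ℝ}
    (h : ∀ i : ℕ, dist (g^[i] x) (g^[i] y) ≤ a) : Dsup g x y ≤ a :=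
  ciSup_le h

lemma Dsup_comm (g : X → X) (x y : X) : Dsup g x y = Dsup g y x := by
  unfold Dsup
  exact iSup_congr fun i => dist_comm _ _

lemma Dsup_triangle (g : X → X) (x y z : X) : Dsup g x z ≤ Dsup g x y + Dsup g y z :=
  Dsup_le g fun i => (dist_triangle _ (g^[i] y) _).trans
    (add_le_add (dist_le_Dsup g x y i) (dist_le_Dsup g y z i))

lemma Dsup_iter (g : X → X) (x y : X) (j : ℕ) :
    Dsup g (g^[j] x) (g^[j] y) ≤ Dsup g x y :=
  Dsup_le g fun i => by
    rw [← Function.iterate_add_apply, ← Function.iterate_add_apply]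
    exact dist_le_Dsup g x y (i + j)

lemma ptwise (f : X ≃ₜ X) (hsen : SenOn ⇑f (CR ⇑f) = ∅) {x : X} (hx : x ∈ CR ⇑f)
    {a : ℝ} (ha : 0 < a) :
    ∃ δ > 0, ∀ y ∈ CR ⇑f, dist x y ≤ δ → ∀ i : ℕ, dist ((⇑f)^[i] x) ((⇑f)^[i] y) ≤ a := by
  have hx' : x ∉ SenOn ⇑f (CR ⇑f) := by rw [hsen]; exact notMem_empty x
  by_contra h
  push_neg at h
  refine hx' ⟨hx, a, ha, fun δ hδ => ?_⟩
  obtain ⟨y, hy, hdy, i, hi⟩ := h δ hδ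
  exact ⟨y, hy, hdy, i, hi⟩

lemma iter_cancel (f : X ≃ₜ X) :
    ∀ (m j : ℕ) (w : X), (⇑f)^[m] ((⇑f.symm)^[m + j] w) = (⇑f.symm)^[j] w := by
  intro m
  induction m with
  | zero => simp
  | succ m ih =>
    intro j w
    have h1 : (⇑f.symm)^[m + 1 + j] w = f.symm ((⇑f.symm)^[m + j] w) := by
      rw [show m + 1 + j = (m + j) + 1 from by ring, Function.iterate_succ_apply']
    rw [Function.iterate_succ_apply, h1, f.apply_symm_apply, ih]

lemma D_isom (f : X ≃ₜ X) (hsen : SenOn ⇑f (CR ⇑f) = ∅) {a b : X}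
    (ha : a ∈ CR ⇑f) (hb : b ∈ CR ⇑f) :
    Dsup ⇑f a b ≤ Dsup ⇑f (f a) (f b) := by
  refine le_of_forall_pos_le_add fun ε hε => ?_
  have hε4 : 0 < ε / 4 := by positivity
  set r : ℕ → X × X := fun n => ((⇑f.symm)^[n] (f a), (⇑f.symm)^[n] (f b)) with hr
  have hfa : f a ∈ CR ⇑f := CR_map ⇑f f.continuous ha
  have hfb : f b ∈ CR ⇑f := CR_map ⇑f f.continuous hb
  have hr1 : ∀ n, (r n).1 ∈ CR ⇑f := fun n => CR_symm_iter f n hfa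
  have hr2 : ∀ n, (r n).2 ∈ CR ⇑f := fun n => CR_symm_iter f n hfb
  obtain ⟨z, -, φ, hφ, hlim⟩ :=
    isCompact_univ.tendsto_subseq (fun n => mem_univ (r n) : ∀ n, r n ∈ (univ : Set (X × X)))
  have hclosed : IsClosed (CR ⇑f) := isClosed_CR ⇑f f.continuous
  have hz1 : z.1 ∈ CR ⇑f := by
    refine hclosed.mem_of_tendsto ((continuous_fst.tendsto z).comp hlim) ?_
    exact Eventually.of_forall fun n => hr1 _
  have hz2 : z.2 ∈ CR ⇑f := by
    refine hclosed.mem_of_tendsto ((continuous_snd.tendsto z).comp hlim) ?_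
    exact Eventually.of_forall fun n => hr2 _
  obtain ⟨δ₁, hδ₁, h1⟩ := ptwise f hsen hz1 hε4
  obtain ⟨δ₂, hδ₂, h2⟩ := ptwise f hsen hz2 hε4
  obtain ⟨N, hN⟩ := Metric.tendsto_atTop.mp hlim (min δ₁ δ₂) (by positivity)
  set m := φ N with hm
  set n := φ (N + 1) with hn
  have hmn : m < n := hφ (Nat.lt_succ_self N)
  set k := n - m with hk
  have hk1 : 1 ≤ k := by omega
  have hnm : n = m + k := by omega
  -- D-closeness of coordinates
  have hdm := hN N le_rfl
  have hdn := hN (N + 1) (Nat.le_succ N)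
  have key : ∀ (p : X × X), dist p z < min δ₁ δ₂ → p.1 ∈ CR ⇑f → p.2 ∈ CR ⇑f →
      Dsup ⇑f z.1 p.1 ≤ ε/4 ∧ Dsup ⇑f z.2 p.2 ≤ ε/4 := by
    intro p hp hp1 hp2
    rw [Prod.dist_eq] at hp
    constructor
    · refine Dsup_le ⇑f (h1 p.1 hp1 ?_)
      rw [dist_comm]
      exact le_of_lt (lt_of_le_of_lt (le_max_left _ _) (hp.trans_le (min_le_left _ _)))
    · refine Dsup_le ⇑f (h2 p.2 hp2 ?_)
      rw [dist_comm]
      exact le_of_lt (lt_of_le_of_lt (le_max_right _ _) (hp.trans_le (min_le_right _ _)))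
  obtain ⟨hm1, hm2⟩ := key (r m) hdm (hr1 m) (hr2 m)
  obtain ⟨hn1, hn2⟩ := key (r n) hdn (hr1 n) (hr2 n)
  have hD1 : Dsup ⇑f (r m).1 (r n).1 ≤ ε/4 + ε/4 := by
    calc Dsup ⇑f (r m).1 (r n).1 ≤ Dsup ⇑f (r m).1 z.1 + Dsup ⇑f z.1 (r n).1 :=
          Dsup_triangle _ _ _ _
      _ ≤ ε/4 + ε/4 := add_le_add (by rw [Dsup_comm]; exact hm1) hn1
  have hD2 : Dsup ⇑f (r m).2 (r n).2 ≤ ε/4 + ε/4 := by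
    calc Dsup ⇑f (r m).2 (r n).2 ≤ Dsup ⇑f (r m).2 z.2 + Dsup ⇑f z.2 (r n).2 :=
          Dsup_triangle _ _ _ _
      _ ≤ ε/4 + ε/4 := add_le_add (by rw [Dsup_comm]; exact hm2) hn2
  -- push forward by f^[m]
  set u : X := (⇑f.symm)^[k] (f a) with hu
  set v : X := (⇑f.symm)^[k] (f b) with hv
  have hfm1 : (⇑f)^[m] ((r m).1) = f a := by simpa using iter_cancel f m 0 (f a)
  have hfm2 : (⇑f)^[m] ((r m).2) = f b := by simpa using iter_cancel f m 0 (f b)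
  have hfn1 : (⇑f)^[m] ((r n).1) = u := by
    show (⇑f)^[m] ((⇑f.symm)^[n] (f a)) = u
    rw [hnm]; exact iter_cancel f m k (f a)
  have hfn2 : (⇑f)^[m] ((r n).2) = v := by
    show (⇑f)^[m] ((⇑f.symm)^[n] (f b)) = v
    rw [hnm]; exact iter_cancel f m k (f b)
  have hDa : Dsup ⇑f (f a) u ≤ ε/4 + ε/4 := by
    rw [← hfm1, ← hfn1]; exact (Dsup_iter ⇑f _ _ m).trans hD1
  have hDb : Dsup ⇑f (f b) v ≤ ε/4 + ε/4 := by
    rw [← hfm2, ← hfn2]; exact (Dsup_iter ⇑f _ _ m).trans hD2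
  -- recover a, b from u, v
  have hua : (⇑f)^[k - 1] u = a := by
    have h := iter_cancel f (k - 1) 1 (f a)
    rw [show k - 1 + 1 = k from by omega] at h
    rw [hu, h]
    simp [f.symm_apply_apply]
  have hvb : (⇑f)^[k - 1] v = b := by
    have h := iter_cancel f (k - 1) 1 (f b)
    rw [show k - 1 + 1 = k from by omega] at h
    rw [hv, h]
    simp [f.symm_apply_apply]
  calc Dsup ⇑f a b = Dsup ⇑f ((⇑f)^[k-1] u) ((⇑f)^[k-1] v) := by rw [hua, hvb]
    _ ≤ Dsup ⇑f u v := Dsup_iter ⇑f u v (k - 1)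
    _ ≤ Dsup ⇑f u (f a) + Dsup ⇑f (f a) (f b) + Dsup ⇑f (f b) v :=
        (Dsup_triangle ⇑f u (f a) v).trans
          (add_le_add_right (le_of_eq rfl) _) |>.trans (by
            have := Dsup_triangle ⇑f (f a) (f b) v
            linarith [Dsup_triangle ⇑f u (f a) v, Dsup_triangle ⇑f (f a) (f b) v])
    _ ≤ (ε/4 + ε/4) + Dsup ⇑f (f a) (f b) + (ε/4 + ε/4) := by
        refine add_le_add (add_le_add ?_ le_rfl) hDb
        rw [Dsup_comm]; exact hDa
    _ = Dsup ⇑f (f a) (f b) + ε := by ring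

end B

section C
variable [CompactSpace X]

lemma D_symm_iter (f : X ≃ₜ X) (hsen : SenOn ⇑f (CR ⇑f) = ∅) (j : ℕ) :
    ∀ {x y : X}, x ∈ CR ⇑f → y ∈ CR ⇑f →
      Dsup ⇑f ((⇑f.symm)^[j] x) ((⇑f.symm)^[j] y) ≤ Dsup ⇑f x y := by
  induction j with
  | zero => intro x y _ _; simp
  | succ j ih =>
    intro x y hx hy
    have hx' : f.symm x ∈ CR ⇑f := CR_symm f hx
    have hy' : f.symm y ∈ CR ⇑f := CR_symm f hy
    have h1 : Dsup ⇑f ((⇑f.symm)^[j] (f.symm x)) ((⇑f.symm)^[j] (f.symm y)) ≤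
        Dsup ⇑f (f.symm x) (f.symm y) := ih hx' hy'
    have h2 : Dsup ⇑f (f.symm x) (f.symm y) ≤ Dsup ⇑f x y := by
      have := D_isom f hsen hx' hy'
      rwa [f.apply_symm_apply, f.apply_symm_apply] at this
    rw [Function.iterate_succ_apply, Function.iterate_succ_apply]
    exact h1.trans h2

theorem stmt_2' [CompactSpace X] (f : X ≃ₜ X) (hexp : Expansive f)
    (hsen : SenOn ⇑f (CR ⇑f) = ∅) :
    (CR ⇑f).Finite := by
  obtain ⟨e, he, hexp'⟩ := hexp
  have key : ∀ x ∈ CR ⇑f, ∃ δ > 0, ∀ y ∈ CR ⇑f, dist x y ≤ δ → y = x := by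
    intro x hx
    obtain ⟨δ, hδ, hδe⟩ := ptwise f hsen hx he
    refine ⟨δ, hδ, fun y hy hdy => ?_⟩
    have hD : Dsup ⇑f x y ≤ e := Dsup_le ⇑f (hδe y hy hdy)
    refine (hexp' x y fun i => ?_).symm
    by_cases hi : 0 ≤ i
    · simp only [ziter, if_pos hi]
      exact (dist_le_Dsup ⇑f x y i.toNat).trans hD
    · simp only [ziter, if_neg hi]
      exact (dist_le_Dsup₀ ⇑f _ _).trans ((D_symm_iter f hsen _ hx hy).trans hD)
  choose! δ hδpos hiso using key
  have hK : IsCompact (CR ⇑f) := (isClosed_CR ⇑f f.continuous).isCompact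
  obtain ⟨t, ht⟩ := hK.elim_finite_subcover
    (fun i : ↥(CR ⇑f) => ball (i : X) (δ i))
    (fun i => isOpen_ball)
    (fun x hx => mem_iUnion.mpr ⟨⟨x, hx⟩, by
      simpa [Metric.mem_ball] using hδpos x hx⟩)
  have hfin : ((fun i : ↥(CR ⇑f) => (i : X)) '' ↑t).Finite := t.finite_toSet.image _
  refine Set.Finite.subset hfin ?_
  intro y hy
  obtain ⟨i, hit, hyi⟩ := Set.mem_iUnion₂.mp (ht hy)
  refine ⟨i, hit, ?_⟩
  have : dist (i : X) y ≤ δ i := by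
    rw [dist_comm]
    exact le_of_lt (by simpa [Metric.mem_ball] using hyi)
  exact (hiso (i : X) i.2 y hy this).symm

end C


theorem stmt_2 [CompactSpace X] (f : X ≃ₜ X) (hexp : Expansive f)
    (hsen : SenOn ⇑f (CR ⇑f) = ∅) :
    (CR ⇑f).Finite := by
  exact stmt_2' f hexp hsen
end

section
/- Let f : X → X be an expansive homeomorphism of a compact metric space X. If X is infinite, then there exist x, y ∈ X with x ≠ y such that lim_{i→∞} d(f^i(x), f^i(y)) = 0. -/
open Metric Filter Function Set

variable {X : Type*} [MetricSpace X]

/-! If two distinct points have forward orbits staying within the expansive constant `e` of each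
other, every limit pair of their forward orbits has its whole two-sided orbit `e`-close, hence lies
on the diagonal; so the two orbits are asymptotic. Otherwise `f` is positively expansive with
constant `e`. By compactness, a pair that stays `e`-close for `N` forward steps is then `ε`-close,
which makes `f⁻¹` uniformly contracting at small scales: pairs closer than some `δ` keep `e`-close
backward orbits forever, so after `N` backward steps they are `ε`-close. Taking `ε` to be the
minimal separation of a finite set and pigeonholing preimages of its points under the surjection
`f⁻ᴺ` into a finite cover by `δ/2`-balls bounds its size uniformly, so `X` is finite. -/

open Topology

lemma Homeomorph.coe_pow (f : X ≃ₜ X) (n : ℕ) : ⇑(f ^ n) = (⇑f)^[n] := by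
  induction n with
  | zero => rfl
  | succ n ih => rw [pow_succ', iterate_succ', ← ih]; rfl

lemma Homeomorph.iterate_iterate_symm_of_le (f : X ≃ₜ X) {m n : ℕ} (h : m ≤ n) (x : X) :
    (⇑f)^[m] ((⇑f.symm)^[n] x) = (⇑f.symm)^[n - m] x := by
  obtain ⟨k, rfl⟩ := Nat.exists_eq_add_of_le h
  rw [Nat.add_sub_cancel_left, iterate_add_apply]
  exact LeftInverse.iterate f.apply_symm_apply m _

lemma UniformContinuous.exists_forall_dist_iterate_lt {g : X → X} (hg : UniformContinuous g)
    (N : ℕ) {c : ℝ} (hc : 0 < c) :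
    ∃ δ > 0, ∀ x y : X, dist x y < δ → ∀ j ≤ N, dist (g^[j] x) (g^[j] y) < c := by
  have hu : UniformContinuous fun x (j : Fin (N + 1)) => g^[j] x :=
    uniformContinuous_pi.2 fun j => UniformContinuous.iterate g j hg
  obtain ⟨δ, hδ, H⟩ := Metric.uniformContinuous_iff.1 hu c hc
  exact ⟨δ, hδ, fun x y hxy j hj => (dist_pi_lt_iff hc).1 (H hxy) ⟨j, Nat.lt_succ_of_le hj⟩⟩

lemma finite_of_forall_exists_surjective_dist_lt [CompactSpace X] {δ : ℝ} (hδ : 0 < δ)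
    (h : ∀ ε > 0, ∃ φ : X → X, Surjective φ ∧ ∀ x y : X, dist x y < δ → dist (φ x) (φ y) < ε) :
    Finite X := by
  obtain ⟨t, -, ht, hcover⟩ := finite_cover_balls_of_compact (isCompact_univ (X := X)) (half_pos hδ)
  have hcenter : ∀ z : X, ∃ p ∈ ht.toFinset, dist z p < δ / 2 := fun z => by
    obtain ⟨p, hp, hz⟩ := mem_iUnion₂.1 (hcover (mem_univ z))
    exact ⟨p, ht.mem_toFinset.2 hp, hz⟩
  choose center hcenter_mem hcenter_dist using hcenter
  have hcard : ∀ S : Finset X, S.card ≤ ht.toFinset.card + 1 := by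
    intro S
    by_contra! hS
    have hsep : 0 < (S : Set X).infsep :=
      S.infsep_pos_iff_nontrivial.2 (Finset.one_lt_card_iff_nontrivial.1 (by omega))
    obtain ⟨φ, hφ, hφδ⟩ := h _ hsep
    obtain ⟨a, ha, b, hb, hab, hcenter_eq⟩ := Finset.exists_ne_map_eq_of_card_lt_of_maps_to
      (by omega : ht.toFinset.card < S.card) (f := fun s => center (surjInv hφ s))
      fun s _ => hcenter_mem _
    have hpre : dist (surjInv hφ a) (surjInv hφ b) < δ := by
      have ha' := hcenter_dist (surjInv hφ a)
      have hb' := hcenter_dist (surjInv hφ b)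
      rw [hcenter_eq] at ha'
      linarith [dist_triangle_right (surjInv hφ a) (surjInv hφ b) (center (surjInv hφ b))]
    have hab_lt := hφδ _ _ hpre
    rw [surjInv_eq hφ, surjInv_eq hφ] at hab_lt
    exact (Set.infsep_le_dist_of_mem ha hb hab).not_gt hab_lt
  exact Cardinal.mk_lt_aleph0_iff.1
    ((Cardinal.card_le_of hcard).trans_lt Cardinal.natCast_lt_aleph0)

lemma ziter_eq_coe_zpow (f : X ≃ₜ X) (i : ℤ) : ziter f i = ⇑(f ^ i) := by
  funext x
  obtain ⟨n, rfl | rfl⟩ := Int.eq_nat_or_neg i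
  · simp [ziter, Homeomorph.coe_pow]
  · rcases n.eq_zero_or_pos with rfl | hn
    · simp [ziter]
    · have hneg : ¬ (0 : ℤ) ≤ -n := by omega
      rw [zpow_neg, zpow_natCast, ← inv_pow, Homeomorph.coe_pow]
      simp only [ziter, if_neg hneg, neg_neg, Int.toNat_natCast]
      rfl

lemma ziter_iterate (f : X ≃ₜ X) {i : ℤ} {n : ℕ} (h : 0 ≤ (n : ℤ) + i) (x : X) :
    ziter f i ((⇑f)^[n] x) = (⇑f)^[((n : ℤ) + i).toNat] x := by
  rw [ziter_eq_coe_zpow, ← Homeomorph.coe_pow, ← Homeomorph.coe_pow, ← Homeomorph.mul_apply,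
    ← zpow_natCast, ← zpow_add, ← zpow_natCast, Int.toNat_of_nonneg h, add_comm]

lemma tendsto_dist_iterate_of_forall_dist_le [CompactSpace X] (f : X ≃ₜ X) {e : ℝ}
    (he : ∀ x y : X, (∀ i : ℤ, dist (ziter f i x) (ziter f i y) ≤ e) → x = y) {x y : X}
    (hxy : ∀ n : ℕ, dist ((⇑f)^[n] x) ((⇑f)^[n] y) ≤ e) :
    Tendsto (fun n : ℕ => dist ((⇑f)^[n] x) ((⇑f)^[n] y)) atTop (𝓝 0) := by
  refine tendsto_of_subseq_tendsto fun ns hns => ?_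
  obtain ⟨⟨p, q⟩, ms, hms, hlim⟩ :=
    CompactSpace.tendsto_subseq fun k => ((⇑f)^[ns k] x, (⇑f)^[ns k] y)
  have hn : Tendsto (ns ∘ ms) atTop atTop := hns.comp hms.tendsto_atTop
  have hpq : p = q := he p q fun i => by
    have hcont : Continuous fun w : X × X => dist (ziter f i w.1) (ziter f i w.2) := by
      rw [ziter_eq_coe_zpow]; fun_prop
    refine le_of_tendsto ((hcont.tendsto _).comp hlim) ?_
    filter_upwards [hn.eventually_ge_atTop (-i).toNat] with k hk
    have hk' : 0 ≤ ((ns (ms k) : ℕ) : ℤ) + i := by simp only [comp_apply] at hk; omega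
    simp only [comp_apply, ziter_iterate f hk']
    exact hxy _
  refine ⟨ms, ?_⟩
  have hdist := (continuous_dist.tendsto (p, q)).comp hlim
  rwa [hpq, dist_self] at hdist

def PositivelyExpansiveWith (f : X → X) (c : ℝ) : Prop :=
  ∀ x y : X, (∀ n : ℕ, dist (f^[n] x) (f^[n] y) ≤ c) → x = y

lemma PositivelyExpansiveWith.exists_forall_iterate_le_imp_dist_lt [CompactSpace X] {f : X → X}
    {c : ℝ} (hf : PositivelyExpansiveWith f c) (hfc : Continuous f) {ε : ℝ} (hε : 0 < ε) :
    ∃ N : ℕ, ∀ x y : X, (∀ n ≤ N, dist (f^[n] x) (f^[n] y) ≤ c) → dist x y < ε := by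
  let U : ℕ → Set (X × X) := fun N => ⋃ n ≤ N, {p | c < dist (f^[n] p.1) (f^[n] p.2)}
  have hUo : ∀ N, IsOpen (U N) := fun N => isOpen_biUnion fun n _ =>
    isOpen_lt continuous_const (((hfc.iterate n).comp continuous_fst).dist
      ((hfc.iterate n).comp continuous_snd))
  have hUmono : Monotone U := fun a b hab =>
    biUnion_mono (fun n hn => le_trans hn hab) fun _ _ => le_rfl
  have hK : IsCompact {p : X × X | ε ≤ dist p.1 p.2} :=
    (isClosed_le continuous_const continuous_dist).isCompact
  have hcover : {p : X × X | ε ≤ dist p.1 p.2} ⊆ ⋃ N, U N := by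
    rintro ⟨x, y⟩ hxy
    have hne : x ≠ y := dist_pos.1 (hε.trans_le hxy)
    obtain ⟨n, hn⟩ : ∃ n, c < dist (f^[n] x) (f^[n] y) := by
      by_contra! h
      exact hne (hf x y h)
    exact mem_iUnion.2 ⟨n, mem_iUnion₂.2 ⟨n, le_rfl, hn⟩⟩
  obtain ⟨N, hN⟩ := hK.elim_directed_cover U hUo hcover hUmono.directed_le
  refine ⟨N, fun x y hxy => ?_⟩
  by_contra! hε
  obtain ⟨n, hn, hsep⟩ := mem_iUnion₂.1 (hN (show (x, y) ∈ _ from hε))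
  exact (hxy n hn).not_gt hsep

lemma dist_iterate_symm_lt_of_forall_le (f : X ≃ₜ X) {c ε : ℝ} {N n : ℕ}
    (hN : ∀ x y : X, (∀ m ≤ N, dist ((⇑f)^[m] x) ((⇑f)^[m] y) ≤ c) → dist x y < ε)
    (hn : N ≤ n) {x y : X} (hxy : ∀ j ≤ n, dist ((⇑f.symm)^[j] x) ((⇑f.symm)^[j] y) ≤ c) :
    dist ((⇑f.symm)^[n] x) ((⇑f.symm)^[n] y) < ε :=
  hN _ _ fun m hm => by
    rw [f.iterate_iterate_symm_of_le (hm.trans hn), f.iterate_iterate_symm_of_le (hm.trans hn)]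
    exact hxy _ (Nat.sub_le n m)

section PositivelyExpansive

variable [CompactSpace X] {f : X ≃ₜ X} {c : ℝ}

lemma PositivelyExpansiveWith.exists_forall_dist_iterate_symm_le
    (hf : PositivelyExpansiveWith f c) (hc : 0 < c) :
    ∃ δ > 0, ∀ x y : X, dist x y < δ → ∀ j, dist ((⇑f.symm)^[j] x) ((⇑f.symm)^[j] y) ≤ c := by
  have hg : UniformContinuous f.symm :=
    CompactSpace.uniformContinuous_of_continuous f.symm.continuous
  obtain ⟨δ₁, hδ₁, hstep⟩ := Metric.uniformContinuous_iff.1 hg c hc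
  obtain ⟨N, hN⟩ := hf.exists_forall_iterate_le_imp_dist_lt f.continuous hδ₁
  obtain ⟨δ, hδ, hinit⟩ := hg.exists_forall_dist_iterate_lt N hc
  refine ⟨δ, hδ, fun x y hxy j => ?_⟩
  induction j using Nat.strong_induction_on with
  | _ j ih =>
    rcases le_or_gt j N with hj | hj
    · exact (hinit x y hxy j hj).le
    · -- the first `n` backward steps being `c`-close with `N ≤ n` forces `δ₁`-closeness at step `n`
      obtain ⟨n, rfl⟩ : ∃ n, j = n + 1 := ⟨j - 1, by omega⟩
      have hclose := dist_iterate_symm_lt_of_forall_le f hN (n := n) (by omega)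
        fun k hk => ih k (by omega)
      rw [iterate_succ_apply', iterate_succ_apply']
      exact (hstep hclose).le

lemma PositivelyExpansiveWith.exists_forall_dist_iterate_symm_lt
    (hf : PositivelyExpansiveWith f c) (hc : 0 < c) :
    ∃ δ > 0, ∀ ε > 0, ∃ N : ℕ, ∀ x y : X, dist x y < δ →
      dist ((⇑f.symm)^[N] x) ((⇑f.symm)^[N] y) < ε := by
  obtain ⟨δ, hδ, hback⟩ := hf.exists_forall_dist_iterate_symm_le hc
  refine ⟨δ, hδ, fun ε hε => ?_⟩
  obtain ⟨N, hN⟩ := hf.exists_forall_iterate_le_imp_dist_lt f.continuous hε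
  exact ⟨N, fun x y hxy => dist_iterate_symm_lt_of_forall_le f hN le_rfl fun j _ => hback x y hxy j⟩

lemma PositivelyExpansiveWith.finite (hf : PositivelyExpansiveWith f c) (hc : 0 < c) :
    Finite X := by
  obtain ⟨δ, hδ, hcontract⟩ := hf.exists_forall_dist_iterate_symm_lt hc
  refine finite_of_forall_exists_surjective_dist_lt hδ fun ε hε => ?_
  obtain ⟨N, hN⟩ := hcontract ε hε
  exact ⟨_, f.symm.surjective.iterate N, hN⟩

end PositivelyExpansive

theorem stmt_3 [CompactSpace X] (f : X ≃ₜ X) (hexp : Expansive f) (hinf : Infinite X) :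
    ∃ x y : X, x ≠ y ∧
      Filter.Tendsto (fun i : ℕ => dist ((⇑f)^[i] x) ((⇑f)^[i] y)) atTop (nhds 0) := by
  obtain ⟨e, he, hE⟩ := hexp
  by_contra! h
  have hpos : PositivelyExpansiveWith f e := fun x y hxy => by
    by_contra hne
    exact h x y hne (tendsto_dist_iterate_of_forall_dist_le f hE hxy)
  exact not_finite_iff_infinite.2 hinf (hpos.finite he)
end

section
/- For an expansive homeomorphism f : X → X of a compact metric space, if the chain recurrent set CR(f) equals the set of periodic points Per(f), then CR(f) is finite. -/
open Metric Filter Function Set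

variable {X : Type*} [MetricSpace X]

open Topology

set_option linter.unusedSectionVars false

section Aux

variable {X : Type*} [MetricSpace X]

private lemma linv_iter (f : X ≃ₜ X) (j : ℕ) (v : X) :
    (⇑f.symm)^[j] ((⇑f)^[j] v) = v :=
  (Function.LeftInverse.iterate f.symm_apply_apply j) v

private lemma iter_period_add {f : X → X} {P : ℕ} {z : X} (hz : f^[P] z = z) (a c : ℕ) :
    f^[a + P * c] z = f^[a] z := by
  rw [Function.iterate_add_apply, Function.iterate_mul]
  congr 1
  exact Function.IsFixedPt.iterate hz c

private lemma symm_iter_eq (f : X ≃ₜ X) {P : ℕ} (hP : 1 ≤ P) {z : X}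
    (hz : (⇑f)^[P] z = z) (j : ℕ) :
    (⇑f.symm)^[j] z = (⇑f)^[j * (P - 1)] z := by
  induction j with
  | zero => simp
  | succ j ih =>
    have hu : (⇑f)^[P] ((⇑f)^[j * (P - 1)] z) = (⇑f)^[j * (P - 1)] z := by
      rw [← Function.iterate_add_apply, add_comm, Function.iterate_add_apply, hz]
    have hfu : f ((⇑f)^[P - 1] ((⇑f)^[j * (P - 1)] z)) = (⇑f)^[j * (P - 1)] z := by
      rw [← Function.iterate_succ_apply' (⇑f) (P - 1) ((⇑f)^[j * (P - 1)] z),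
        show (P - 1).succ = P from by omega]
      exact hu
    have key : f.symm ((⇑f)^[j * (P - 1)] z)
        = (⇑f)^[P - 1] ((⇑f)^[j * (P - 1)] z) := by
      conv_lhs => rw [← hfu]
      exact f.symm_apply_apply _
    rw [Function.iterate_succ_apply', ih, key, ← Function.iterate_add_apply]
    congr 1
    ring

private lemma forward_iter_as_symm (f : X ≃ₜ X) {P : ℕ} (hP : 1 ≤ P) {z : X}
    (hz : (⇑f)^[P] z = z) (m : ℕ) :
    (⇑f)^[m] z = (⇑f.symm)^[m * (P - 1)] z := by
  rw [symm_iter_eq f hP hz]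
  rcases Nat.lt_or_ge P 2 with h2 | h2
  · have hP1 : P = 1 := by omega
    subst hP1
    simp only [Nat.sub_self, Nat.mul_zero, Function.iterate_zero_apply]
    have := iter_period_add hz 0 m
    simpa using this
  · obtain ⟨R, rfl⟩ : ∃ R, P = R + 2 := ⟨P - 2, by omega⟩
    have harith : m * (R + 2 - 1) * (R + 2 - 1) = m + (R + 2) * (m * R) := by
      have : R + 2 - 1 = R + 1 := rfl
      rw [this]; ring
    rw [harith, iter_period_add hz]

private lemma unif_cont (g : X → X) [CompactSpace X] (hg : Continuous g)
    {ε : ℝ} (hε : 0 < ε) :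
    ∃ ρ > 0, ∀ u v : X, dist u v ≤ ρ → dist (g u) (g v) ≤ ε := by
  have hu := CompactSpace.uniformContinuous_of_continuous hg
  rw [Metric.uniformContinuous_iff] at hu
  obtain ⟨ρ, hρ, H⟩ := hu ε hε
  exact ⟨ρ / 2, by positivity, fun u v huv =>
    (H (lt_of_le_of_lt huv (by linarith))).le⟩

private lemma unif_cont_iter (f : X → X) [CompactSpace X] (hf : Continuous f)
    {ε : ℝ} (hε : 0 < ε) (J : ℕ) :
    ∃ ρ > 0, ∀ u v : X, dist u v ≤ ρ → ∀ i ≤ J, dist (f^[i] u) (f^[i] v) ≤ ε := by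
  induction J with
  | zero =>
    exact ⟨ε, hε, fun u v huv i hi => by
      interval_cases i
      simpa using huv⟩
  | succ J ih =>
    obtain ⟨ρ1, hρ1, H1⟩ := ih
    obtain ⟨ρ2, hρ2, H2⟩ := unif_cont (f^[J + 1]) (hf.iterate _) hε
    refine ⟨min ρ1 ρ2, lt_min hρ1 hρ2, fun u v huv i hi => ?_⟩
    rcases Nat.lt_or_ge i (J + 1) with hi' | hi'
    · exact H1 u v (le_trans huv (min_le_left _ _)) i (by omega)
    · have : i = J + 1 := by omega
      subst this
      exact H2 u v (le_trans huv (min_le_right _ _))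

private lemma cr_isClosed (f : X → X) [CompactSpace X] (hf : Continuous f) :
    IsClosed (CR f) := by
  apply isClosed_of_closure_subset
  intro x hx
  intro δ hδ
  obtain ⟨η, hη, Hη⟩ := unif_cont f hf (show (0:ℝ) < δ / 2 by linarith)
  set ε := min η (δ / 4) with hε
  have hε0 : 0 < ε := lt_min hη (by linarith)
  have hεη : ε ≤ η := min_le_left _ _
  have hεδ : ε ≤ δ / 4 := min_le_right _ _
  rw [Metric.mem_closure_iff] at hx
  obtain ⟨x', hx', hxx'⟩ := hx ε hε0
  obtain ⟨k, hk1, c, hc0, hck, hcl⟩ := hx' ε hε0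
  set b : ℕ → X := fun i => if i = 0 ∨ i = k then x else c i with hb
  have hb0 : b 0 = x := by simp [hb]
  have hbk : b k = x := by simp [hb]
  refine ⟨k, hk1, b, hb0, hbk, ?_⟩
  intro i hik
  have hfx : dist (f x) (f x') ≤ δ / 2 := Hη x x' (le_trans hxx'.le hεη)
  by_cases hi0 : i = 0
  · subst hi0
    rw [hb0]
    have hfc : dist (f x') (c 1) ≤ ε := by
      have := hcl 0 hik
      rwa [hc0] at this
    by_cases hk1' : 1 = k
    · have hbone : b 1 = x := by simp [hb, hk1']
      rw [hbone]
      have hc1 : c 1 = x' := by rw [hk1', hck]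
      rw [hc1] at hfc
      calc dist (f x) x ≤ dist (f x) (f x') + dist (f x') x' + dist x' x :=
            dist_triangle4 _ _ _ _
        _ ≤ δ / 2 + ε + ε := by
            rw [dist_comm x' x]
            exact add_le_add (add_le_add hfx hfc) hxx'.le
        _ ≤ δ := by linarith
    · have hbone : b 1 = c 1 := by
        simp only [hb]
        rw [if_neg (by omega)]
      rw [hbone]
      calc dist (f x) (c 1) ≤ dist (f x) (f x') + dist (f x') (c 1) :=
            dist_triangle _ _ _
        _ ≤ δ / 2 + ε := add_le_add hfx hfc
        _ ≤ δ := by linarith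
  · have hbi : b i = c i := by
      simp only [hb]
      rw [if_neg (by omega)]
    rw [hbi]
    by_cases hik' : i + 1 = k
    · have hbk' : b (i + 1) = x := by simp [hb, hik']
      rw [hbk']
      have hck' : c (i + 1) = x' := by rw [hik', hck]
      calc dist (f (c i)) x ≤ dist (f (c i)) (c (i + 1)) + dist (c (i + 1)) x :=
            dist_triangle _ _ _
        _ ≤ ε + ε :=
            add_le_add (hcl i hik) (by rw [hck', dist_comm]; exact hxx'.le)
        _ ≤ δ := by linarith
    · have hbsucc : b (i + 1) = c (i + 1) := by
        simp only [hb]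
        rw [if_neg (by omega)]
      rw [hbsucc]
      exact le_trans (hcl i hik) (by linarith)

private lemma per_iterate_mem {f : X → X} (m : ℕ) {u : X} (hu : u ∈ Per f) :
    f^[m] u ∈ Per f := by
  induction m with
  | zero => simpa using hu
  | succ m ih =>
    obtain ⟨j, hj, hju⟩ := ih
    rw [Function.iterate_succ_apply']
    exact ⟨j, hj, by
      rw [← Function.iterate_succ_apply, Function.iterate_succ_apply', hju]⟩

private lemma finite_of_separated [CompactSpace X] {S : Set X} {δ : ℝ} (hδ : 0 < δ)
    (H : ∀ x ∈ S, ∀ y ∈ S, dist x y ≤ δ → x = y) : S.Finite := by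
  obtain ⟨s, hs, hcover⟩ :=
    (Metric.totallyBounded_iff.mp
      (isCompact_univ (X := X)).totallyBounded) (δ / 2) (by positivity)
  have hsub : S ⊆ ⋃ y ∈ s, S ∩ Metric.ball y (δ / 2) := by
    intro x hx
    have := hcover (Set.mem_univ x)
    simp only [Set.mem_iUnion] at this ⊢
    obtain ⟨y, hy, hxy⟩ := this
    exact ⟨y, hy, hx, hxy⟩
  refine Set.Finite.subset (Set.Finite.biUnion hs fun y _ => ?_) hsub
  apply Set.Subsingleton.finite
  rintro a ⟨ha, hab⟩ b ⟨hb, hbb⟩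
  apply H a ha b hb
  calc dist a b ≤ dist a y + dist y b := dist_triangle _ _ _
    _ ≤ δ / 2 + δ / 2 := by
        rw [Metric.mem_ball] at hab hbb
        rw [dist_comm y b]
        exact add_le_add hab.le hbb.le
    _ = δ := by ring

end Aux
theorem stmt_4 [CompactSpace X] (f : X ≃ₜ X) (hexp : Expansive f)
    (h : CR ⇑f = Per ⇑f) :
    (CR ⇑f).Finite := by
  classical
  obtain ⟨e, he, hexpe⟩ := hexp
  obtain ⟨η, hη, Hη⟩ := unif_cont (⇑f) f.continuous he
  set t := min η e with htdef
  have ht0 : 0 < t := lt_min hη he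
  have hte : t ≤ e := min_le_right _ _
  have htη : t ≤ η := min_le_left _ _
  have hper : ∀ x ∈ CR ⇑f, ∃ p, 1 ≤ p ∧ (⇑f)^[p] x = x := by
    intro x hx; rw [h] at hx; exact hx
  have hpair : ∀ x ∈ CR ⇑f, ∀ y ∈ CR ⇑f,
      ∃ P, 1 ≤ P ∧ (⇑f)^[P] x = x ∧ (⇑f)^[P] y = y := by
    intro x hx y hy
    obtain ⟨p, hp, hpx⟩ := hper x hx
    obtain ⟨q, hq, hqy⟩ := hper y hy
    refine ⟨p * q, Nat.one_le_iff_ne_zero.mpr (by positivity), ?_, ?_⟩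
    · rw [Function.iterate_mul]; exact Function.IsFixedPt.iterate hpx q
    · rw [mul_comm, Function.iterate_mul]; exact Function.IsFixedPt.iterate hqy p
  by_cases hδ : ∃ δ > 0, ∀ x ∈ CR ⇑f, ∀ y ∈ CR ⇑f, dist x y ≤ δ → x = y
  · obtain ⟨δ, hδ0, H⟩ := hδ
    exact finite_of_separated hδ0 H
  exfalso
  push_neg at hδ
  -- choose nearby distinct pairs
  have hxy : ∀ n : ℕ, ∃ x ∈ CR ⇑f, ∃ y ∈ CR ⇑f,
      dist x y ≤ min t (1 / (n + 1)) ∧ x ≠ y := by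
    intro n
    exact hδ _ (lt_min ht0 (by positivity))
  choose x hx y hy hdist hne using hxy
  -- bad forward indices exist
  have hbad : ∀ n : ℕ, ∃ i : ℕ, t < dist ((⇑f)^[i] (x n)) ((⇑f)^[i] (y n)) := by
    intro n
    by_contra hcon
    push_neg at hcon
    apply hne n
    apply hexpe
    intro i
    unfold ziter
    split_ifs with h0
    · exact le_trans (hcon i.toNat) hte
    · obtain ⟨P, hP, hPx, hPy⟩ := hpair _ (hx n) _ (hy n)
      rw [symm_iter_eq f hP hPx, symm_iter_eq f hP hPy]
      exact le_trans (hcon _) hte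
  set k : ℕ → ℕ := fun n =>
    sInf {i : ℕ | t < dist ((⇑f)^[i] (x n)) ((⇑f)^[i] (y n))} with hkdef
  have hk_mem : ∀ n, t < dist ((⇑f)^[k n] (x n)) ((⇑f)^[k n] (y n)) :=
    fun n => Nat.sInf_mem (hbad n)
  have hk_min : ∀ n, ∀ i < k n, dist ((⇑f)^[i] (x n)) ((⇑f)^[i] (y n)) ≤ t := by
    intro n i hi
    by_contra hcon
    push_neg at hcon
    exact absurd (Nat.sInf_le hcon) (not_le.mpr hi)
  have hk1 : ∀ n, 1 ≤ k n := by
    intro n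
    by_contra hcon
    push_neg at hcon
    have hk0 : k n = 0 := by omega
    have := hk_mem n
    rw [hk0] at this
    simp only [Function.iterate_zero_apply] at this
    exact absurd (le_trans (hdist n) (min_le_left _ _)) (not_le.mpr this)
  have hk_tendsto : Tendsto k atTop atTop := by
    rw [Filter.tendsto_atTop]
    intro J
    obtain ⟨ρ, hρ, Hρ⟩ := unif_cont_iter (⇑f) f.continuous ht0 J
    obtain ⟨N, hN⟩ := exists_nat_ge (1 / ρ)
    filter_upwards [eventually_ge_atTop N] with n hn
    by_contra hcon
    push_neg at hcon
    have h1 : dist (x n) (y n) ≤ ρ := by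
      refine le_trans (le_trans (hdist n) (min_le_right _ _)) ?_
      rw [div_le_iff₀ (by positivity)]
      have hcast : (N : ℝ) ≤ (n : ℝ) := by exact_mod_cast hn
      have h1N : 1 ≤ (N : ℝ) * ρ := (div_le_iff₀ hρ).mp hN
      nlinarith [mul_nonneg (sub_nonneg.mpr hcast) hρ.le]
    have h2 := Hρ _ _ h1 (k n) (by omega)
    exact absurd (hk_mem n) (not_lt.mpr h2)
  set z : ℕ → X := fun n => (⇑f)^[k n] (x n) with hzdef
  set w : ℕ → X := fun n => (⇑f)^[k n] (y n) with hwdef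
  have hzw_e : ∀ n, dist (z n) (w n) ≤ e := by
    intro n
    have h1 : dist ((⇑f)^[k n - 1] (x n)) ((⇑f)^[k n - 1] (y n)) ≤ t :=
      hk_min n _ (by have := hk1 n; omega)
    have h2 : k n = (k n - 1) + 1 := by have := hk1 n; omega
    have h3 : ∀ u, (⇑f)^[k n] u = f ((⇑f)^[k n - 1] u) := by
      intro u
      conv_lhs => rw [h2]
      rw [Function.iterate_succ_apply']
    show dist ((⇑f)^[k n] (x n)) ((⇑f)^[k n] (y n)) ≤ e
    rw [h3, h3]
    exact Hη _ _ (le_trans h1 htη)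
  obtain ⟨zw, -, φ, hφ, hlim⟩ :=
    isCompact_univ.tendsto_subseq (x := fun n => (z n, w n))
      (fun n => Set.mem_univ _)
  have hz : Tendsto (fun n => z (φ n)) atTop (𝓝 zw.1) :=
    (continuous_fst.tendsto _).comp hlim
  have hw : Tendsto (fun n => w (φ n)) atTop (𝓝 zw.2) :=
    (continuous_snd.tendsto _).comp hlim
  set zl := zw.1
  set wl := zw.2
  have hd_lim : Tendsto (fun n => dist (z (φ n)) (w (φ n))) atTop (𝓝 (dist zl wl)) :=
    hz.dist hw
  have h_t_le : t ≤ dist zl wl :=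
    ge_of_tendsto hd_lim (Eventually.of_forall fun n => (hk_mem (φ n)).le)
  have h_le_e : dist zl wl ≤ e :=
    le_of_tendsto hd_lim (Eventually.of_forall fun n => hzw_e (φ n))
  have hback : ∀ j : ℕ, 1 ≤ j →
      dist ((⇑f.symm)^[j] zl) ((⇑f.symm)^[j] wl) ≤ t := by
    intro j hj
    have hcont : Continuous ((⇑f.symm)^[j]) := f.symm.continuous.iterate j
    have hzj : Tendsto (fun n => (⇑f.symm)^[j] (z (φ n))) atTop
        (𝓝 ((⇑f.symm)^[j] zl)) := (hcont.tendsto _).comp hz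
    have hwj : Tendsto (fun n => (⇑f.symm)^[j] (w (φ n))) atTop
        (𝓝 ((⇑f.symm)^[j] wl)) := (hcont.tendsto _).comp hw
    apply le_of_tendsto (hzj.dist hwj)
    filter_upwards [(hk_tendsto.comp hφ.tendsto_atTop).eventually_ge_atTop j]
      with n hn
    have hn' : j ≤ k (φ n) := hn
    have heq : ∀ u, (⇑f.symm)^[j] ((⇑f)^[k (φ n)] u) = (⇑f)^[k (φ n) - j] u := by
      intro u
      have hsplit : (⇑f)^[k (φ n)] u = (⇑f)^[j] ((⇑f)^[k (φ n) - j] u) := by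
        rw [← Function.iterate_add_apply]
        congr 1
        omega
      rw [hsplit, linv_iter]
    show dist ((⇑f.symm)^[j] ((⇑f)^[k (φ n)] (x (φ n))))
        ((⇑f.symm)^[j] ((⇑f)^[k (φ n)] (y (φ n)))) ≤ t
    rw [heq, heq]
    exact hk_min (φ n) _ (by omega)
  have hCRclosed : IsClosed (CR ⇑f) := cr_isClosed (⇑f) f.continuous
  have hinv : ∀ n, z n ∈ CR ⇑f ∧ w n ∈ CR ⇑f := by
    intro n
    constructor
    · rw [h]; exact per_iterate_mem _ (by rw [← h]; exact hx n)
    · rw [h]; exact per_iterate_mem _ (by rw [← h]; exact hy n)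
  have hzl : zl ∈ CR ⇑f :=
    hCRclosed.mem_of_tendsto hz (Eventually.of_forall fun n => (hinv (φ n)).1)
  have hwl : wl ∈ CR ⇑f :=
    hCRclosed.mem_of_tendsto hw (Eventually.of_forall fun n => (hinv (φ n)).2)
  obtain ⟨P, hP, hPz, hPw⟩ := hpair _ hzl _ hwl
  have hback_e : ∀ j : ℕ, dist ((⇑f.symm)^[j] zl) ((⇑f.symm)^[j] wl) ≤ e := by
    intro j
    rcases Nat.eq_zero_or_pos j with h0 | h0
    · subst h0; simpa using h_le_e
    · exact le_trans (hback j h0) hte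
  have hzweq : zl = wl := by
    apply hexpe
    intro i
    unfold ziter
    split_ifs with h0
    · rw [forward_iter_as_symm f hP hPz, forward_iter_as_symm f hP hPw]
      exact hback_e _
    · exact hback_e _
  rw [hzweq, dist_self] at h_t_le
  exact absurd h_t_le (not_le.mpr ht0)
end

section
/- Let f : X → X be an expansive homeomorphism of a compact metric space with expansive constant e > 0. Then for every x ∈ X, the set W^u(x) ∩ W^s(x') is countable for any x' ∈ X, where W^u(x) = {y : lim_{i→−∞} d(f^i(x), f^i(y)) = 0} and W^s(x') = {y : lim_{i→+∞} d(f^i(x'), f^i(y)) = 0}. -/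
open Metric Filter Function Set

variable {X : Type*} [MetricSpace X]

/-- In a compact metric space, a set whose distinct points are at distance > e is finite. -/
lemma sep_finite {Y : Type*} [MetricSpace Y] [CompactSpace Y] {s : Set Y} {e : ℝ} (he : 0 < e)
    (hs : ∀ p ∈ s, ∀ q ∈ s, p ≠ q → e < dist p q) : s.Finite := by
  obtain ⟨t, -, htf, hcov⟩ :=
    finite_cover_balls_of_compact (isCompact_univ (X := Y)) (half_pos he)
  have hex : ∀ p : s, ∃ c : t, (p : Y) ∈ ball (c : Y) (e / 2) := by
    intro p
    have := hcov (mem_univ (p : Y))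
    simp only [mem_iUnion] at this
    obtain ⟨c, hc, hpc⟩ := this
    exact ⟨⟨c, hc⟩, hpc⟩
  choose g hg using hex
  have hinj : Function.Injective g := by
    intro p q hpq
    by_contra hne
    have hne' : (p : Y) ≠ (q : Y) := fun h => hne (Subtype.ext h)
    have hlt := hs p p.2 q q.2 hne'
    have d1 := hg p
    have d2 := hg q
    rw [hpq] at d1
    rw [mem_ball] at d1 d2
    have : dist (p : Y) (q : Y) < e := by
      calc dist (p : Y) (q : Y) ≤ dist (p : Y) ((g q : Y)) + dist ((g q : Y)) (q : Y) :=
            dist_triangle _ _ _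
        _ < e / 2 + e / 2 := by rw [dist_comm ((g q : Y))]; exact add_lt_add d1 d2
        _ = e := by ring
    linarith
  haveI := htf.to_subtype
  exact Set.finite_coe_iff.mp (Finite.of_injective g hinj)

theorem stmt_6 [CompactSpace X] (f : X ≃ₜ X) (e : ℝ) (he : 0 < e)
    (hexp : ∀ x y : X, (∀ i : ℤ, dist (ziter f i x) (ziter f i y) ≤ e) → x = y)
    (x x' : X) :
    ({y : X | Filter.Tendsto (fun n : ℕ => dist (ziter f (-(n : ℤ)) x) (ziter f (-(n : ℤ)) y))
        atTop (nhds 0)} ∩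
     {y : X | Filter.Tendsto (fun n : ℕ => dist (ziter f (n : ℤ) x') (ziter f (n : ℤ) y))
        atTop (nhds 0)}).Countable := by
  set A : ℕ → Set X := fun n => {y | ∀ i : ℕ, n ≤ i →
      dist (ziter f (-(i : ℤ)) x) (ziter f (-(i : ℤ)) y) ≤ e / 2 ∧
      dist (ziter f (i : ℤ) x') (ziter f (i : ℤ) y) ≤ e / 2} with hA
  have hfin : ∀ n : ℕ, (A n).Finite := by
    intro n
    set F : X → (Fin (2 * n + 1) → X) := fun y j => ziter f ((j : ℤ) - n) y with hF
    have key : ∀ y ∈ A n, ∀ z ∈ A n, y ≠ z → e < dist (F y) (F z) := by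
      intro y hy z hz hyz
      by_contra hle
      push_neg at hle
      apply hyz
      apply hexp
      intro i
      rcases le_or_gt (n : ℤ) i with h1 | h1
      · have hi : ((i.toNat : ℕ) : ℤ) = i := Int.toNat_of_nonneg (by omega)
        have hn : n ≤ i.toNat := by omega
        have h2 := (hy i.toNat hn).2
        have h3 := (hz i.toNat hn).2
        rw [hi] at h2 h3
        calc dist (ziter f i y) (ziter f i z)
            ≤ dist (ziter f i x') (ziter f i y) + dist (ziter f i x') (ziter f i z) :=
              dist_triangle_left _ _ _
          _ ≤ e / 2 + e / 2 := add_le_add h2 h3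
          _ = e := by ring
      rcases le_or_gt i (-(n : ℤ)) with h2 | h2
      · have hi : (((-i).toNat : ℕ) : ℤ) = -i := Int.toNat_of_nonneg (by omega)
        have hn : n ≤ (-i).toNat := by omega
        have h3 := (hy (-i).toNat hn).1
        have h4 := (hz (-i).toNat hn).1
        rw [hi] at h3 h4
        simp only [neg_neg] at h3 h4
        calc dist (ziter f i y) (ziter f i z)
            ≤ dist (ziter f i x) (ziter f i y) + dist (ziter f i x) (ziter f i z) :=
              dist_triangle_left _ _ _
          _ ≤ e / 2 + e / 2 := add_le_add h3 h4
          _ = e := by ring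
      · have hj : (i + n).toNat < 2 * n + 1 := by omega
        set j : Fin (2 * n + 1) := ⟨(i + n).toNat, hj⟩ with hjdef
        have hji : ((j : ℕ) : ℤ) - n = i := by
          simp only [hjdef]
          omega
        have hd := dist_le_pi_dist (F y) (F z) j
        have hFy : F y j = ziter f i y := by rw [hF]; simp only [hji]
        have hFz : F z j = ziter f i z := by rw [hF]; simp only [hji]
        rw [hFy, hFz] at hd
        linarith
    have hinjF : Set.InjOn F (A n) := by
      intro y hy z hz hFyz
      by_contra hne
      have := key y hy z hz hne
      rw [hFyz] at this
      simp only [dist_self] at this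
      linarith
    have hsep : ∀ p ∈ F '' A n, ∀ q ∈ F '' A n, p ≠ q → e < dist p q := by
      rintro p ⟨y, hy, rfl⟩ q ⟨z, hz, rfl⟩ hpq
      exact key y hy z hz (fun h => hpq (by rw [h]))
    exact Set.Finite.of_finite_image (sep_finite he hsep) hinjF
  have hsub : ({y : X | Filter.Tendsto
        (fun n : ℕ => dist (ziter f (-(n : ℤ)) x) (ziter f (-(n : ℤ)) y)) atTop (nhds 0)} ∩
      {y : X | Filter.Tendsto (fun n : ℕ => dist (ziter f (n : ℤ) x') (ziter f (n : ℤ) y))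
        atTop (nhds 0)}) ⊆ ⋃ n, A n := by
    rintro y ⟨hy1, hy2⟩
    have h1 : ∀ᶠ n : ℕ in atTop,
        dist (ziter f (-(n : ℤ)) x) (ziter f (-(n : ℤ)) y) ≤ e / 2 :=
      hy1.eventually (eventually_le_nhds (half_pos he))
    have h2 : ∀ᶠ n : ℕ in atTop,
        dist (ziter f (n : ℤ) x') (ziter f (n : ℤ) y) ≤ e / 2 :=
      hy2.eventually (eventually_le_nhds (half_pos he))
    obtain ⟨N1, hN1⟩ := eventually_atTop.mp h1
    obtain ⟨N2, hN2⟩ := eventually_atTop.mp h2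
    refine mem_iUnion.mpr ⟨max N1 N2, fun i hi => ⟨hN1 i ?_, hN2 i ?_⟩⟩
    · exact le_trans (le_max_left _ _) hi
    · exact le_trans (le_max_right _ _) hi
  exact Set.Countable.mono hsub (Set.countable_iUnion fun n => (hfin n).countable)
end

section
/- Let f : X → X be a continuous map of a compact metric space. For every ε > 0 there exists δ > 0 such that every δ-chain (x_i)_{i=0}^k of f with x_0 = x_k satisfies {x_i : 0 ≤ i ≤ k} ⊆ B_ε(CR(f)), the closed ε-neighborhood of the chain recurrent set. -/
open Metric Filter Function Set

variable {X : Type*} [MetricSpace X]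

lemma rotate_chain (f : X → X) {δ : ℝ} {k : ℕ} (hk : 1 ≤ k) (c : ℕ → X) (h0 : c 0 = c k)
    (hch : ∀ i < k, dist (f (c i)) (c (i + 1)) ≤ δ) :
    ∀ i ≤ k, IsChain' f δ (c i) (c i) := by
  intro i hi
  have key : c (i % k) = c i := by
    rcases eq_or_lt_of_le hi with h | h
    · subst h; simp [Nat.mod_self, h0]
    · rw [Nat.mod_eq_of_lt h]
  refine ⟨k, hk, fun j => c ((i + j) % k), by simpa using key, by simpa using key, ?_⟩
  intro j hj
  simp only []
  set m := (i + j) % k with hm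
  have hmk : m < k := Nat.mod_lt _ (by omega)
  have h1 : (i + (j + 1)) % k = (m + 1) % k := by
    conv_lhs => rw [show i + (j + 1) = (i + j) + 1 by ring, Nat.add_mod (i + j) 1 k]
    conv_rhs => rw [Nat.add_mod m 1 k, Nat.mod_eq_of_lt hmk]
  have h2 : c ((m + 1) % k) = c (m + 1) := by
    rcases lt_or_eq_of_le (Nat.succ_le_of_lt hmk) with h | h
    · rw [Nat.mod_eq_of_lt h]
    · rw [show m + 1 = k from h, Nat.mod_self, h0]
  rw [h1, h2]
  exact hch m hmk

theorem stmt_7 [CompactSpace X] (f : X → X) (hc : Continuous f) :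
    ∀ ε > 0, ∃ δ > 0, ∀ k : ℕ, 1 ≤ k → ∀ c : ℕ → X, c 0 = c k →
      (∀ i < k, dist (f (c i)) (c (i + 1)) ≤ δ) →
      ∀ i ≤ k, c i ∈ nbd ε (CR f) := by
  intro ε hε
  by_contra hcon
  push_neg at hcon
  have H : ∀ n : ℕ, ∃ x : X, IsChain' f (1/(n+1)) x x ∧ ε < infDist x (CR f) := by
    intro n
    obtain ⟨k, hk, c, h0, hch, i, hi, hbad⟩ := hcon (1/(n+1)) (by positivity)
    exact ⟨c i, rotate_chain f hk c h0 hch i hi, lt_of_not_ge hbad⟩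
  choose x hx1 hx2 using H
  obtain ⟨a, -, φ, hφ, hlim⟩ := isCompact_univ.tendsto_subseq (fun n => mem_univ (x n))
  have haCR : a ∈ CR f := by
    simp only [CR, mem_setOf_eq]
    intro δ hδ
    obtain ⟨η, hη, hfη⟩ := Metric.uniformContinuous_iff.mp
      (CompactSpace.uniformContinuous_of_continuous hc) (δ/2) (by linarith)
    set δ' := min (η/2) (δ/4) with hδ'def
    have hδ'pos : 0 < δ' := lt_min (by linarith) (by linarith)
    have hδ'η : δ' < η := lt_of_le_of_lt (min_le_left _ _) (by linarith)
    have hδ'δ : δ' ≤ δ/4 := min_le_right _ _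
    obtain ⟨N1, hN1⟩ := Metric.tendsto_atTop.mp hlim δ' hδ'pos
    obtain ⟨N2, hN2⟩ := exists_nat_gt (1/δ')
    set n := max N1 N2 with hn
    have hdya : dist (x (φ n)) a ≤ δ' := le_of_lt (hN1 n (le_max_left _ _))
    have hsmall : 1/((φ n : ℝ)+1) ≤ δ' := by
      have hφn : (N2 : ℝ) ≤ (φ n : ℝ) := by
        exact_mod_cast le_trans (le_max_right N1 N2) (hφ.le_apply)
      rw [div_le_iff₀ (by positivity)]
      have h1 : (1:ℝ)/δ' < (φ n : ℝ) + 1 := by linarith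
      have := (div_lt_iff₀ hδ'pos).mp h1
      linarith
    obtain ⟨m, hm, c, hc0, hcm, hcc⟩ := hx1 (φ n)
    set y := x (φ n) with hy
    set d : ℕ → X := fun j => if j = 0 ∨ j = m then a else c j with hd
    have hdc : ∀ j, dist (d j) (c j) ≤ δ' := by
      intro j
      by_cases h : j = 0 ∨ j = m
      · simp only [hd, if_pos h]
        rcases h with h | h
        · subst h; rw [hc0, dist_comm]; exact hdya
        · subst h; rw [hcm, dist_comm]; exact hdya
      · simp [hd, if_neg h, hδ'pos.le]
    refine ⟨m, hm, d, by simp [hd], by simp [hd], ?_⟩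
    intro j hj
    have e1 : dist (f (d j)) (f (c j)) ≤ δ/2 :=
      le_of_lt (hfη (lt_of_le_of_lt (hdc j) hδ'η))
    calc dist (f (d j)) (d (j+1))
        ≤ dist (f (d j)) (f (c j)) + dist (f (c j)) (c (j+1)) + dist (c (j+1)) (d (j+1)) :=
          dist_triangle4 _ _ _ _
      _ ≤ δ/2 + δ' + δ' := by
          refine add_le_add (add_le_add e1 (le_trans (hcc j hj) hsmall)) ?_
          rw [dist_comm]; exact hdc (j+1)
      _ ≤ δ := by linarith
  have h2 : infDist a (CR f) = 0 := infDist_zero_of_mem haCR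
  have h3 : ε ≤ infDist a (CR f) := by
    have hcont : Tendsto (fun n => infDist ((x ∘ φ) n) (CR f)) atTop (nhds (infDist a (CR f))) :=
      ((continuous_infDist_pt (CR f)).tendsto a).comp hlim
    exact ge_of_tendsto' hcont (fun n => le_of_lt (hx2 (φ n)))
  linarith
end

section
/- For any continuous map f : X → X of a compact metric space, CR(f) = CR(f|_{CR(f)}); that is, every chain recurrent point of f is chain recurrent for the restriction of f to the chain recurrent set, using chains lying in CR(f). -/
open Metric Filter Function Set Topology

variable {X : Type*} [MetricSpace X]

/-- A δ-chain from x to y lying entirely in S. -/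
def ChainIn (f : X → X) (S : Set X) (δ : ℝ) (x y : X) : Prop :=
  ∃ k : ℕ, 1 ≤ k ∧ ∃ c : ℕ → X, c 0 = x ∧ c k = y ∧ (∀ i ≤ k, c i ∈ S) ∧
    ∀ i < k, dist (f (c i)) (c (i + 1)) ≤ δ

/-- Points joined to x by δ-chains in both directions for every δ. -/
def AA (f : X → X) (x : X) : Set X :=
  {y | ∀ δ > 0, IsChain' f δ x y ∧ IsChain' f δ y x}

lemma IsChain'.mono {f : X → X} {δ δ' : ℝ} (h : δ ≤ δ') {x y : X}
    (hch : IsChain' f δ x y) : IsChain' f δ' x y := by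
  obtain ⟨k, hk, c, h0, hkx, hj⟩ := hch
  exact ⟨k, hk, c, h0, hkx, fun i hi => (hj i hi).trans h⟩

lemma IsChain'.concat {f : X → X} {δ : ℝ} {x y z : X}
    (h1 : IsChain' f δ x y) (h2 : IsChain' f δ y z) : IsChain' f δ x z := by
  obtain ⟨k1, hk1, c1, hc10, hc1k, hj1⟩ := h1
  obtain ⟨k2, hk2, c2, hc20, hc2k, hj2⟩ := h2
  refine ⟨k1 + k2, by omega, fun i => if i ≤ k1 then c1 i else c2 (i - k1), ?_, ?_, ?_⟩
  · simp
    exact hc10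
  · have : ¬ (k1 + k2 ≤ k1) := by omega
    simp only [this, if_false]
    simpa using hc2k
  · intro i hi
    rcases lt_trichotomy i k1 with h | h | h
    · have h1' : i ≤ k1 := by omega
      have h2' : i + 1 ≤ k1 := by omega
      simpa [h1', h2'] using hj1 i h
    · subst h
      have h1' : ¬ (i + 1 ≤ i) := by omega
      simp only [le_refl, if_true, h1', if_false, Nat.add_sub_cancel_left]
      rw [hc1k, ← hc20]
      exact hj2 0 (by omega)
    · have h1' : ¬ (i ≤ k1) := by omega
      have h2' : ¬ (i + 1 ≤ k1) := by omega
      simp only [h1', h2', if_false]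
      have e1 : i + 1 - k1 = i - k1 + 1 := by omega
      rw [e1]
      exact hj2 (i - k1) (by omega)

lemma AA_subset_CR {f : X → X} {x : X} : AA f x ⊆ CR f := by
  intro y hy δ hδ
  obtain ⟨h1, h2⟩ := hy δ hδ
  exact h2.concat h1

lemma mem_AA_self {f : X → X} {x : X} (hx : x ∈ CR f) : x ∈ AA f x :=
  fun δ hδ => ⟨hx δ hδ, hx δ hδ⟩

/-- Replace the last point of a chain by a nearby point. -/
lemma IsChain'.replace_end {f : X → X} {δ δ' : ℝ} {x z z' : X}
    (h : IsChain' f δ x z) (hd : dist z z' ≤ δ') : IsChain' f (δ + δ') x z' := by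
  obtain ⟨k, hk, c, h0, hkz, hj⟩ := h
  refine ⟨k, hk, fun i => if i = k then z' else c i, by show (if (0:ℕ) = k then z' else c 0) = x; rw [if_neg (by omega : ¬ (0 : ℕ) = k)]; exact h0, by simp, ?_⟩
  intro i hi
  have hik : ¬ (i = k) := by omega
  simp only [hik, if_false]
  by_cases h1 : i + 1 = k
  · simp only [h1, if_true]
    calc dist (f (c i)) z' ≤ dist (f (c i)) (c (i+1)) + dist (c (i+1)) z' := dist_triangle _ _ _
      _ ≤ δ + δ' := add_le_add (hj i hi) (by rw [h1, hkz]; exact hd)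
  · simp only [h1, if_false]
    exact (hj i hi).trans (by linarith [dist_nonneg (x := z) (y := z')])

/-- Replace the first point of a chain by a point whose image is nearby. -/
lemma IsChain'.replace_start {f : X → X} {δ δ' : ℝ} {x z z' : X}
    (h : IsChain' f δ z x) (hd : dist (f z') (f z) ≤ δ') : IsChain' f (δ + δ') z' x := by
  obtain ⟨k, hk, c, h0, hkz, hj⟩ := h
  refine ⟨k, hk, fun i => if i = 0 then z' else c i, by simp, by show (if k = 0 then z' else c k) = x; rw [if_neg (by omega : ¬ k = 0)]; exact hkz, ?_⟩
  intro i hi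
  by_cases h1 : i = 0
  · subst h1
    simp only [if_true, (by omega : ¬ (0 + 1 = 0)), if_false]
    calc dist (f z') (c 1) ≤ dist (f z') (f z) + dist (f z) (c 1) := dist_triangle _ _ _
      _ ≤ δ' + δ := add_le_add hd (by rw [← h0]; exact hj 0 (by omega))
      _ = δ + δ' := by ring
  · simp only [h1, (by omega : ¬ (i + 1 = 0)), if_false]
    exact (hj i hi).trans (by linarith [dist_nonneg (x := f z') (y := f z)])

/-- Prefix of a chain from x to x reaches any chain point. -/
lemma chain_prefix {f : X → X} {δ : ℝ} {x : X} {k : ℕ} {c : ℕ → X}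
    (hk : 1 ≤ k) (h0 : c 0 = x) (hkx : c k = x)
    (hj : ∀ i < k, dist (f (c i)) (c (i + 1)) ≤ δ) {i : ℕ} (hi : i ≤ k) :
    IsChain' f δ x (c i) := by
  rcases Nat.eq_zero_or_pos i with h | h
  · subst h
    exact ⟨k, hk, c, h0, by rw [hkx, h0], hj⟩
  · exact ⟨i, h, c, h0, rfl, fun j hji => hj j (by omega)⟩

/-- Suffix of a chain from x to x goes from any chain point back to x. -/
lemma chain_suffix {f : X → X} {δ : ℝ} {x : X} {k : ℕ} {c : ℕ → X}
    (hk : 1 ≤ k) (h0 : c 0 = x) (hkx : c k = x)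
    (hj : ∀ i < k, dist (f (c i)) (c (i + 1)) ≤ δ) {i : ℕ} (hi : i ≤ k) :
    IsChain' f δ (c i) x := by
  rcases eq_or_lt_of_le hi with h | h
  · rw [h, hkx]
    exact ⟨k, hk, c, h0, hkx, hj⟩
  · have hki : i + (k - i) = k := by omega
    refine ⟨k - i, by omega, fun j => c (i + j), by simp, ?_, ?_⟩
    · show c (i + (k - i)) = x
      rw [hki]; exact hkx
    · intro j hjk
      show dist (f (c (i + j))) (c (i + (j + 1))) ≤ δ
      have e : i + (j + 1) = i + j + 1 := by omega
      rw [e]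
      exact hj (i + j) (by omega)

/-- Key compactness lemma: points chained to/from x with small δ are near AA f x. -/
lemma near_AA [CompactSpace X] (f : X → X) (hc : Continuous f) (x : X) :
    ∀ r > 0, ∃ δ > 0, ∀ y, IsChain' f δ x y → IsChain' f δ y x → infDist y (AA f x) < r := by
  intro r hr
  by_contra hcon
  push_neg at hcon
  have H : ∀ n : ℕ, ∃ y, IsChain' f (1 / (n + 1)) x y ∧ IsChain' f (1 / (n + 1)) y x ∧
      r ≤ infDist y (AA f x) := by
    intro n
    obtain ⟨y, h1, h2, h3⟩ := hcon (1 / (n + 1)) (by positivity)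
    exact ⟨y, h1, h2, h3⟩
  choose u hu1 hu2 hu3 using H
  obtain ⟨y, -, φ, hφ, hconv⟩ := isCompact_univ.tendsto_subseq (fun n => mem_univ (u n))
  have hyA : y ∈ AA f x := by
    intro δ hδ
    have huc := Metric.uniformContinuous_iff.mp (CompactSpace.uniformContinuous_of_continuous hc)
    obtain ⟨η, hη, hηd⟩ := huc (δ / 2) (by linarith)
    -- choose j large
    have h1 : ∀ᶠ j in atTop, dist (u (φ j)) y < min (η / 2) (δ / 2) := by
      have := hconv
      rw [Metric.tendsto_atTop] at this
      obtain ⟨N, hN⟩ := this (min (η / 2) (δ / 2)) (by positivity)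
      exact eventually_atTop.2 ⟨N, fun j hj => hN j hj⟩
    have h2 : ∀ᶠ j in atTop, (1 : ℝ) / (φ j + 1) ≤ δ / 2 := by
      obtain ⟨N, hN⟩ := exists_nat_gt (2 / δ)
      refine eventually_atTop.2 ⟨N, fun j hj => ?_⟩
      have hφj : (N : ℝ) ≤ φ j := by
        exact_mod_cast le_trans hj (hφ.le_apply)
      rw [div_le_iff₀ (by positivity)]
      have : (2 : ℝ) / δ ≤ φ j := le_trans hN.le hφj
      rw [div_le_iff₀ hδ] at this
      nlinarith
    obtain ⟨j, hj1, hj2⟩ := (h1.and h2).exists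
    set n := φ j
    have hd : dist (u n) y < min (η / 2) (δ / 2) := hj1
    constructor
    · have := (hu1 n).mono hj2
      have := this.replace_end (z' := y) (le_of_lt (lt_of_lt_of_le hd (min_le_right _ _)))
      exact this.mono (by linarith)
    · have hf : dist (f y) (f (u n)) ≤ δ / 2 := by
        refine le_of_lt (hηd ?_)
        rw [dist_comm]
        exact lt_of_lt_of_le hd (le_trans (min_le_left _ _) (by linarith))
      have := (hu2 n).mono hj2
      have := this.replace_start (z' := y) hf
      exact this.mono (by linarith)
  have h0 : infDist y (AA f x) = 0 := infDist_zero_of_mem hyA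
  have hge : r ≤ infDist y (AA f x) := by
    have hcont : Tendsto (fun j => infDist (u (φ j)) (AA f x)) atTop (𝓝 (infDist y (AA f x))) :=
      ((continuous_infDist_pt (AA f x)).continuousAt.tendsto.comp hconv)
    exact ge_of_tendsto hcont (Eventually.of_forall fun j => hu3 (φ j))
  rw [h0] at hge
  linarith

theorem stmt_8 [CompactSpace X] (f : X → X) (hc : Continuous f) :
    CR f = {x | ∀ δ > 0, ChainIn f (CR f) δ x x} := by
  ext x
  constructor
  · intro hx ε hε
    -- uniform continuity constant
    have huc := Metric.uniformContinuous_iff.mp (CompactSpace.uniformContinuous_of_continuous hc)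
    obtain ⟨η₀, hη₀, hηd⟩ := huc (ε / 3) (by linarith)
    set m : ℝ := min (η₀ / 2) (ε / 3) with hm
    have hmpos : 0 < m := by positivity
    obtain ⟨δ₀, hδ₀, hkey⟩ := near_AA f hc x m hmpos
    set δ : ℝ := min δ₀ (ε / 3) with hδdef
    have hδpos : 0 < δ := lt_min hδ₀ (by linarith)
    obtain ⟨k, hk, c, h0, hkx, hj⟩ := hx δ hδpos
    -- every chain point is near AA f x
    have hnear : ∀ i ≤ k, ∃ a ∈ AA f x, dist (c i) a ≤ m := by
      intro i hi
      have h1 : IsChain' f δ₀ x (c i) :=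
        (chain_prefix hk h0 hkx hj hi).mono (min_le_left _ _)
      have h2 : IsChain' f δ₀ (c i) x :=
        (chain_suffix hk h0 hkx hj hi).mono (min_le_left _ _)
      have := hkey (c i) h1 h2
      obtain ⟨a, haA, had⟩ := (infDist_lt_iff ⟨x, mem_AA_self hx⟩).mp this
      exact ⟨a, haA, had.le⟩
    -- choose nearby points in AA, with endpoints fixed to x
    have H : ∀ i : ℕ, ∃ a, a ∈ AA f x ∧ (0 < i → i < k → dist (c i) a ≤ m) := by
      intro i
      by_cases hi : 0 < i ∧ i < k
      · obtain ⟨a, haA, had⟩ := hnear i hi.2.le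
        exact ⟨a, haA, fun _ _ => had⟩
      · exact ⟨x, mem_AA_self hx, fun h1 h2 => absurd ⟨h1, h2⟩ hi⟩
    choose g hg1 hg2 using H
    set c' : ℕ → X := fun i => if i = 0 ∨ i = k then x else g i with hc'
    have hc'mem : ∀ i ≤ k, c' i ∈ CR f := by
      intro i _
      by_cases h : i = 0 ∨ i = k
      · simp only [hc', h, if_true]
        exact AA_subset_CR (mem_AA_self hx)
      · simp only [hc', h, if_false]
        exact AA_subset_CR (hg1 i)
    have hdist : ∀ i ≤ k, dist (c i) (c' i) ≤ m := by
      intro i hi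
      by_cases h : i = 0 ∨ i = k
      · simp only [hc', h, if_true]
        rcases h with h | h
        · subst h; rw [h0]; simp [hmpos.le]
        · subst h; rw [hkx]; simp [hmpos.le]
      · push_neg at h
        simp only [hc', h.1, h.2, or_self, if_false]
        exact hg2 i (by omega) (by omega)
    refine ⟨k, hk, c', by simp [hc'], by simp [hc'], hc'mem, ?_⟩
    intro i hi
    have hfc : dist (f (c' i)) (f (c i)) ≤ ε / 3 := by
      refine le_of_lt (hηd ?_)
      calc dist (c' i) (c i) = dist (c i) (c' i) := dist_comm _ _
        _ ≤ m := hdist i (by omega)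
        _ < η₀ := lt_of_le_of_lt (min_le_left _ _) (by linarith)
    calc dist (f (c' i)) (c' (i + 1))
        ≤ dist (f (c' i)) (f (c i)) + dist (f (c i)) (c (i + 1)) + dist (c (i + 1)) (c' (i + 1)) := by
          have t1 := dist_triangle (f (c' i)) (f (c i)) (c' (i+1))
          have t2 := dist_triangle (f (c i)) (c (i+1)) (c' (i+1))
          linarith
      _ ≤ ε / 3 + δ + m := by
          refine add_le_add (add_le_add hfc (hj i hi)) (hdist (i+1) (by omega))
      _ ≤ ε / 3 + ε / 3 + ε / 3 := by
          refine add_le_add (add_le_add le_rfl (min_le_right _ _)) (min_le_right _ _)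
      _ = ε := by ring
  · intro hx δ hδ
    obtain ⟨k, hk, c, h0, hkx, -, hj⟩ := hx δ hδ
    exact ⟨k, hk, c, h0, hkx, hj⟩
end

section
/- Let f : X → X be a homeomorphism of a compact metric space and S a periodic orbit of f. If f is expansive on B_b(S) for some b > 0, then S is locally maximal: there is r > 0 with S = ⋂_{i∈ℤ} f^i(B_r(S)). -/
open Metric Filter Function Set

variable {X : Type*} [MetricSpace X]

/-!
A finite invariant set `S` is `m`-separated for some `m > 0`. Take `r` so small that `f` and `f⁻¹`
move `r`-close points less than `m / 2` apart. If the whole orbit of `x` stays in `B_r(S)` and `x`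
is `r`-close to `s ∈ S`, then the point of `S` nearest to `f x` lies within `r + m / 2 < m` of
`f s`, so it is `f s`; inductively the orbit of `x` `r`-shadows the orbit of `s` in both time
directions, and expansiveness on `B_b(S)` forces `x = s`.
-/

theorem ziter_zero (f : X ≃ₜ X) (x : X) : ziter f 0 x = x := by
  simp [ziter]

theorem ziter_eq_zpow (f : X ≃ₜ X) (i : ℤ) : ziter f i = ⇑(f.toEquiv ^ i) := by
  funext x
  rcases i with n | n
  · simp only [ziter, Int.ofNat_eq_natCast, Int.natCast_nonneg, if_true, Int.toNat_natCast]
    rfl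
  · have : (-Int.negSucc n).toNat = n + 1 := by omega
    simp only [ziter, (Int.negSucc_lt_zero n).not_ge, if_false, this, zpow_negSucc, ← inv_pow]
    rfl

theorem ziter_add_one (f : X ≃ₜ X) (i : ℤ) (x : X) : ziter f (i + 1) x = f (ziter f i x) := by
  rw [ziter_eq_zpow, ziter_eq_zpow, add_comm, zpow_one_add, Equiv.Perm.mul_apply]
  rfl

theorem ziter_sub_one (f : X ≃ₜ X) (i : ℤ) (x : X) : ziter f (i - 1) x = f.symm (ziter f i x) := by
  rw [f.eq_symm_apply, ← ziter_add_one, sub_add_cancel]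

theorem Set.Finite.exists_pos_forall_dist_lt_imp_eq {S : Set X} (hS : S.Finite) :
    ∃ m > 0, ∀ a ∈ S, ∀ b ∈ S, dist a b < m → a = b := by
  obtain ⟨C, hC, hsep⟩ := hS.relatively_discrete
  have hC1 : min C 1 ≠ ⊤ := (min_le_right C 1).trans_lt ENNReal.one_lt_top |>.ne
  refine ⟨(min C 1).toReal, ENNReal.toReal_pos (by positivity) hC1, fun a ha b hb hab => ?_⟩
  by_contra hne
  rw [dist_edist, ENNReal.toReal_lt_toReal (edist_ne_top a b) hC1] at hab
  exact (hsep a ha b hb hne).not_gt (hab.trans_le (min_le_left C 1))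

theorem Set.MapsTo.ziter {f : X ≃ₜ X} {S : Set X} (hf : MapsTo f S S) (hf' : MapsTo f.symm S S)
    (i : ℤ) : MapsTo (ziter f i) S S := by
  induction i using Int.induction_on with
  | zero => exact fun x hx => (ziter_zero f x).symm ▸ hx
  | succ n ih => exact fun x hx => (ziter_add_one f n x).symm ▸ hf (ih hx)
  | pred n ih => exact fun x hx => (ziter_sub_one f (-n) x).symm ▸ hf' (ih hx)

theorem subset_nbd {r : ℝ} (hr : 0 ≤ r) (S : Set X) : S ⊆ nbd r S :=
  fun _ hx => (infDist_zero_of_mem hx).trans_le hr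

theorem nbd_mono {r r' : ℝ} (h : r ≤ r') (S : Set X) : nbd r S ⊆ nbd r' S :=
  fun _ hx => le_trans hx h

theorem IsCompact.exists_dist_le_of_mem_nbd {S : Set X} (hS : IsCompact S) (hne : S.Nonempty)
    {r : ℝ} {x : X} (hx : x ∈ nbd r S) : ∃ s ∈ S, dist x s ≤ r := by
  obtain ⟨s, hs, hxs⟩ := hS.exists_infDist_eq_dist hne x
  exact ⟨s, hs, hxs ▸ hx⟩

theorem Set.Finite.exists_pos_forall_dist_map_le {g : X → X} (hg : UniformContinuous g)
    {S : Set X} (hS : S.Finite) (hgS : MapsTo g S S) :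
    ∃ δ > 0, ∀ r ≤ δ, ∀ x, ∀ s ∈ S, dist x s ≤ r → g x ∈ nbd r S → dist (g x) (g s) ≤ r := by
  obtain ⟨m, hm, hsep⟩ := hS.exists_pos_forall_dist_lt_imp_eq
  obtain ⟨ε, hε, hgε⟩ := Metric.uniformContinuous_iff.1 hg (m / 2) (half_pos hm)
  refine ⟨min (ε / 2) (m / 3), by positivity, fun r hr x s hs hxs hgx => ?_⟩
  obtain ⟨s', hs', hgxs'⟩ := hS.isCompact.exists_dist_le_of_mem_nbd ⟨s, hs⟩ hgx
  have hgs : dist (g x) (g s) < m / 2 :=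
    hgε (hxs.trans_lt (hr.trans_lt ((min_le_left _ _).trans_lt (half_lt_self hε))))
  have : s' = g s := hsep s' hs' (g s) (hgS hs) <| calc
    dist s' (g s) ≤ dist s' (g x) + dist (g x) (g s) := dist_triangle _ _ _
    _ < m := by rw [dist_comm]; linarith [hr.trans (min_le_right (ε / 2) (m / 3))]
  exact this ▸ hgxs'

theorem dist_ziter_le_of_forall_ziter_mem_nbd {f : X ≃ₜ X} {S : Set X} {r : ℝ}
    (hf : MapsTo f S S) (hf' : MapsTo f.symm S S)
    (hstep : ∀ x, ∀ s ∈ S, dist x s ≤ r → f x ∈ nbd r S → dist (f x) (f s) ≤ r)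
    (hstep' : ∀ x, ∀ s ∈ S, dist x s ≤ r → f.symm x ∈ nbd r S → dist (f.symm x) (f.symm s) ≤ r)
    {x s : X} (hx : ∀ i : ℤ, ziter f i x ∈ nbd r S) (hs : s ∈ S) (hxs : dist x s ≤ r) (i : ℤ) :
    dist (ziter f i x) (ziter f i s) ≤ r := by
  induction i using Int.induction_on with
  | zero => simpa only [ziter_zero] using hxs
  | succ n ih =>
    rw [ziter_add_one, ziter_add_one]
    exact hstep _ _ (hf.ziter hf' n hs) ih (ziter_add_one f n x ▸ hx (n + 1))
  | pred n ih =>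
    rw [ziter_sub_one, ziter_sub_one]
    exact hstep' _ _ (hf.ziter hf' _ hs) ih (ziter_sub_one f (-n) x ▸ hx (-n - 1))

theorem Set.Finite.eq_setOf_forall_ziter_mem_nbd [CompactSpace X] {f : X ≃ₜ X} {S : Set X}
    (hS : S.Finite) (hne : S.Nonempty) (hf : MapsTo f S S) (hf' : MapsTo f.symm S S)
    {b e : ℝ} (hb : 0 < b) (he : 0 < e) (hexp : ExpConstOn f (nbd b S) e) :
    ∃ r > 0, S = {x : X | ∀ i : ℤ, ziter f i x ∈ nbd r S} := by
  obtain ⟨δ, hδ, hstep⟩ := hS.exists_pos_forall_dist_map_le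
    (CompactSpace.uniformContinuous_of_continuous f.continuous) hf
  obtain ⟨δ', hδ', hstep'⟩ := hS.exists_pos_forall_dist_map_le
    (CompactSpace.uniformContinuous_of_continuous f.symm.continuous) hf'
  set r := min (min b e) (min δ δ')
  have hrb : r ≤ b := (min_le_left _ _).trans (min_le_left _ _)
  have hre : r ≤ e := (min_le_left _ _).trans (min_le_right _ _)
  refine ⟨r, by positivity, Subset.antisymm ?_ fun x hx => ?_⟩
  · exact fun x hx i => subset_nbd (by positivity) S (hf.ziter hf' i hx)
  obtain ⟨s, hs, hxs⟩ := hS.isCompact.exists_dist_le_of_mem_nbd hne (ziter_zero f x ▸ hx 0)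
  have hshadow := dist_ziter_le_of_forall_ziter_mem_nbd hf hf'
    (hstep r ((min_le_right _ _).trans (min_le_left _ _)))
    (hstep' r ((min_le_right _ _).trans (min_le_right _ _))) hx hs hxs
  rwa [hexp x s (fun i => nbd_mono hrb S (hx i))
    (fun i => subset_nbd hb.le S (hf.ziter hf' i hs)) (fun i => (hshadow i).trans hre)]

theorem Function.IsPeriodicPt.setOf_exists_lt_iterate_eq_range {α : Type*} {g : α → α} {j : ℕ}
    {p : α} (h : IsPeriodicPt g j p) (hj : 0 < j) :
    {x | ∃ i < j, g^[i] p = x} = range fun i => g^[i] p := by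
  refine Subset.antisymm (fun _ ⟨i, _, hi⟩ => ⟨i, hi⟩) ?_
  rintro _ ⟨i, rfl⟩
  exact ⟨i % j, Nat.mod_lt i hj, h.iterate_mod_apply i⟩

theorem Function.IsPeriodicPt.mapsTo_symm_range_iterate {α : Type*} {g : α ≃ α} {j : ℕ} {p : α}
    (h : IsPeriodicPt g j p) (hj : 0 < j) :
    MapsTo g.symm (range fun i => g^[i] p) (range fun i => g^[i] p) := by
  rintro _ ⟨i, rfl⟩
  refine ⟨i + (j - 1), ?_⟩
  rw [g.eq_symm_apply, ← iterate_succ_apply' g, show (i + (j - 1)).succ = i + j by omega,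
    iterate_add_apply, h.eq]

theorem stmt_11 [CompactSpace X] (f : X ≃ₜ X) (S : Set X)
    (horb : ∃ (p : X) (j : ℕ), 1 ≤ j ∧ (⇑f)^[j] p = p ∧ S = {x | ∃ i < j, (⇑f)^[i] p = x})
    (hexp : ∃ b > 0, ∃ e > 0, ExpConstOn f (nbd b S) e) :
    ∃ r > 0, S = {x : X | ∀ i : ℤ, ziter f i x ∈ nbd r S} := by
  obtain ⟨p, j, hj, hper, rfl⟩ := horb
  obtain ⟨b, hb, e, he, hexp⟩ := hexp
  have horbit := IsPeriodicPt.setOf_exists_lt_iterate_eq_range hper hj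
  have hfin : {x | ∃ i < j, (⇑f)^[i] p = x}.Finite :=
    ((finite_Iio j).image fun i => (⇑f)^[i] p).subset fun _ ⟨i, hi, hx⟩ => ⟨i, hi, hx⟩
  refine hfin.eq_setOf_forall_ziter_mem_nbd ⟨p, 0, hj, rfl⟩ ?_ ?_ hb he hexp
  · rw [horbit]
    exact fun _ ⟨i, hi⟩ => ⟨i + 1, hi ▸ iterate_succ_apply' _ i p⟩
  · rw [horbit]
    exact IsPeriodicPt.mapsTo_symm_range_iterate (g := f.toEquiv) hper hj
end

section
/- Let f : X → X be a homeomorphism of a compact metric space, S ⊆ X a closed set, and e > 0 an expansive constant for f on S. Then for every ε > 0 there exists n ≥ 0 such that for all x, y ∈ ⋂_{i=−n}^{n} f^i(S), sup_{−n ≤ i ≤ n} d(f^i(x), f^i(y)) ≤ e implies d(x,y) ≤ ε. -/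
open Metric Filter Function Set

variable {X : Type*} [MetricSpace X]

open Topology in
lemma ziter_continuous (f : X ≃ₜ X) (i : ℤ) : Continuous (ziter f i) := by
  unfold ziter
  split_ifs
  · exact f.continuous.iterate _
  · exact f.symm.continuous.iterate _

open Topology in
theorem stmt_12 [CompactSpace X] (f : X ≃ₜ X) (S : Set X) (hSc : IsClosed S)
    (e : ℝ) (he : 0 < e) (hexp : ExpConstOn f S e) :
    ∀ ε > 0, ∃ n : ℕ, ∀ x y : X,
      (∀ i : ℤ, |i| ≤ (n : ℤ) → ziter f i x ∈ S) →
      (∀ i : ℤ, |i| ≤ (n : ℤ) → ziter f i y ∈ S) →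
      (∀ i : ℤ, |i| ≤ (n : ℤ) → dist (ziter f i x) (ziter f i y) ≤ e) →
      dist x y ≤ ε := by
  intro ε hε
  by_contra h
  push_neg at h
  choose x y hx hy hd hgt using h
  obtain ⟨a, -, φ, hφ, hxa⟩ := isCompact_univ.tendsto_subseq (fun n => mem_univ (x n))
  obtain ⟨b, -, ψ, hψ, hyb⟩ := isCompact_univ.tendsto_subseq
    (fun n => mem_univ (y (φ n)))
  set u : ℕ → ℕ := fun n => φ (ψ n) with hu
  have hun : ∀ n : ℕ, n ≤ u n := fun n =>
    le_trans hψ.le_apply (le_trans (hφ.le_apply) (by rfl))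
  have hxa' : Tendsto (fun n => x (u n)) atTop (𝓝 a) :=
    hxa.comp hψ.tendsto_atTop
  have hyb' : Tendsto (fun n => y (u n)) atTop (𝓝 b) := hyb
  have hev : ∀ i : ℤ, ∀ᶠ n : ℕ in atTop, |i| ≤ (u n : ℤ) := by
    intro i
    filter_upwards [eventually_ge_atTop i.natAbs] with n hn
    calc |i| = (i.natAbs : ℤ) := (Int.abs_eq_natAbs i)
    _ ≤ (n : ℤ) := by exact_mod_cast hn
    _ ≤ (u n : ℤ) := by exact_mod_cast hun n
  have hab : a = b := by
    apply hexp
    · intro i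
      refine hSc.mem_of_tendsto ((ziter_continuous f i).continuousAt.tendsto.comp hxa') ?_
      filter_upwards [hev i] with n hn using hx (u n) i hn
    · intro i
      refine hSc.mem_of_tendsto ((ziter_continuous f i).continuousAt.tendsto.comp hyb') ?_
      filter_upwards [hev i] with n hn using hy (u n) i hn
    · intro i
      have hT : Tendsto (fun n => dist (ziter f i (x (u n))) (ziter f i (y (u n))))
          atTop (𝓝 (dist (ziter f i a) (ziter f i b))) :=
        (((ziter_continuous f i).continuousAt.tendsto.comp hxa').dist
          ((ziter_continuous f i).continuousAt.tendsto.comp hyb'))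
      refine le_of_tendsto hT ?_
      filter_upwards [hev i] with n hn using hd (u n) i hn
  have hT : Tendsto (fun n => dist (x (u n)) (y (u n))) atTop (𝓝 (dist a b)) :=
    hxa'.dist hyb'
  have : ε ≤ dist a b := le_of_tendsto_of_tendsto' tendsto_const_nhds hT
    (fun n => (hgt (u n)).le)
  rw [← hab, dist_self] at this
  linarith
end

section
/- Let f : X → X be a homeomorphism of a compact metric space X with X = Per(f) (every point is periodic). Define Y = {x ∈ X : x is not isolated in X}. Then every sensitive point x ∈ Sen(f) satisfies x ∈ closure(Y \ {x}). -/
open Metric Filter Function Set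

variable {X : Type*} [MetricSpace X]

lemma isOpen_singleton_of_notMem_closure {z : X} (h : z ∉ closure ({z}ᶜ : Set X)) :
    IsOpen ({z} : Set X) := by
  have h1 : ({z} : Set X) = (closure ({z}ᶜ : Set X))ᶜ := by
    apply Set.eq_of_subset_of_subset
    · intro w hw
      simp only [Set.mem_singleton_iff] at hw
      subst hw
      exact h
    · intro w hw
      by_contra hne
      exact hw (subset_closure hne)
  rw [h1]
  exact isClosed_closure.isOpen_compl

lemma finite_of_compact_isolated {S : Set X} (hc : IsCompact S)
    (h : ∀ z ∈ S, IsOpen ({z} : Set X)) : S.Finite := by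
  obtain ⟨t, ht⟩ := hc.elim_finite_subcover (fun z : S => ({z.1} : Set X))
    (fun z => h z.1 z.2) (fun z hz => Set.mem_iUnion.mpr ⟨⟨z, hz⟩, rfl⟩)
  refine Set.Finite.subset (t.finite_toSet.image Subtype.val) ?_
  intro z hz
  have := ht hz
  simp only [Set.mem_iUnion, Set.mem_singleton_iff] at this
  obtain ⟨w, hw, hzw⟩ := this
  exact ⟨w, hw, hzw.symm⟩

lemma homeo_mem_Y (g : X ≃ₜ X) {z : X} (hz : z ∈ closure ({z}ᶜ : Set X)) :
    g z ∈ closure ({g z}ᶜ : Set X) := by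
  have h1 : (⇑g) '' ({z}ᶜ : Set X) = ({g z}ᶜ : Set X) := by
    rw [← Set.image_singleton, ← Set.image_compl_eq g.bijective]
  have h2 : g z ∈ (⇑g) '' closure ({z}ᶜ : Set X) := ⟨z, hz, rfl⟩
  rwa [g.image_closure, h1] at h2

lemma homeo_iter_mem_Y (g : X ≃ₜ X) (j : ℕ) {z : X} (hz : z ∈ closure ({z}ᶜ : Set X)) :
    (⇑g)^[j] z ∈ closure ({(⇑g)^[j] z}ᶜ : Set X) := by
  induction j with
  | zero => simpa using hz
  | succ n ih => rw [Function.iterate_succ_apply']; exact homeo_mem_Y g ih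

omit [MetricSpace X] in
lemma iterate_mod_eq' {f : X → X} {q : ℕ} {z : X} (hq : f^[q] z = z) (r : ℕ) :
    f^[r] z = f^[r % q] z := by
  conv_lhs => rw [← Nat.mod_add_div r q]
  rw [Function.iterate_add_apply]
  congr 1
  rw [Function.iterate_mul]
  exact Function.IsFixedPt.iterate hq (r / q)

omit [MetricSpace X] in
lemma orbit_finite {f : X → X} {z : X} {q : ℕ} (hq1 : 1 ≤ q) (hq : f^[q] z = z) :
    {w | ∃ r : ℕ, f^[r] z = w}.Finite := by
  apply Set.Finite.subset (Set.finite_range (fun i : Fin q => f^[(i : ℕ)] z))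
  rintro w ⟨r, rfl⟩
  exact ⟨⟨r % q, Nat.mod_lt _ hq1⟩, (iterate_mod_eq' hq r).symm⟩

theorem stmt_14 [CompactSpace X] (f : X ≃ₜ X) (hper : ∀ x : X, x ∈ Per ⇑f) :
    ∀ x ∈ SenOn ⇑f Set.univ,
      x ∈ closure (({z : X | z ∈ closure ({z}ᶜ : Set X)} \ {x} : Set X)) := by
  intro x hx
  obtain ⟨-, a, ha, hsen⟩ := hx
  by_contra hcon
  rw [Metric.mem_closure_iff] at hcon
  push_neg at hcon
  obtain ⟨ε, hε, hball⟩ := hcon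
  obtain ⟨p, hp1, hpx⟩ := hper x
  -- around each orbit point of x, Y-points coincide with the orbit point
  have hC : ∀ j : ℕ, ∃ ej > 0, ∀ z : X, z ∈ closure ({z}ᶜ : Set X) →
      dist ((⇑f)^[j] x) z < ej → z = (⇑f)^[j] x := by
    intro j
    have hcont : Continuous ((⇑f.symm)^[j]) := f.symm.continuous.iterate j
    obtain ⟨ej, hej, hspec⟩ := Metric.continuous_iff.mp hcont ((⇑f)^[j] x) ε hε
    refine ⟨ej, hej, fun z hzY hdist => ?_⟩
    have hinv : ∀ w : X, (⇑f.symm)^[j] ((⇑f)^[j] w) = w :=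
      fun w => (Function.LeftInverse.iterate f.symm_apply_apply j) w
    have hinv2 : ∀ w : X, (⇑f)^[j] ((⇑f.symm)^[j] w) = w :=
      fun w => (Function.LeftInverse.iterate f.apply_symm_apply j) w
    have hwY : (⇑f.symm)^[j] z ∈ closure ({(⇑f.symm)^[j] z}ᶜ : Set X) :=
      homeo_iter_mem_Y f.symm j hzY
    have hd : dist ((⇑f.symm)^[j] z) x < ε := by
      have h3 := hspec z (by rwa [dist_comm] at hdist)
      rwa [hinv x] at h3
    have hzx : (⇑f.symm)^[j] z = x := by
      by_contra hne
      have h4 := hball _ ⟨hwY, hne⟩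
      rw [dist_comm] at h4
      linarith
    have h5 : (⇑f)^[j] ((⇑f.symm)^[j] z) = (⇑f)^[j] x := by rw [hzx]
    rwa [hinv2 z] at h5
  choose e he1 he2 using hC
  have hpne : (Finset.range p).Nonempty := ⟨0, Finset.mem_range.mpr hp1⟩
  set ε' : ℝ := (Finset.range p).inf' hpne e with hε'def
  have hε' : 0 < ε' := (Finset.lt_inf'_iff hpne).mpr fun j _ => he1 j
  have hε'le : ∀ j ∈ Finset.range p, ε' ≤ e j := fun j hj => Finset.inf'_le e hj
  -- uniform continuity of f
  have huc := CompactSpace.uniformContinuous_of_continuous f.continuous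
  rw [Metric.uniformContinuous_iff] at huc
  obtain ⟨δ0, hδ0, hδspec⟩ := huc (ε'/2) (by positivity)
  set b : ℝ := min (δ0/2) a with hbdef
  have hb : 0 < b := lt_min (by positivity) ha
  have hba : b ≤ a := min_le_right _ _
  have hbδ : b < δ0 := lt_of_le_of_lt (min_le_left _ _) (by linarith)
  -- the finite set A of possible separation points
  set A : Set X := ⋃ j ∈ Set.Iio p,
    (Metric.closedBall ((⇑f)^[j] x) (ε'/2) ∩ {z : X | b ≤ dist ((⇑f)^[j] x) z}) with hAdef
  have hAfin : A.Finite := by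
    apply Set.Finite.biUnion (Set.finite_Iio p)
    intro j hj
    apply finite_of_compact_isolated
    · apply IsClosed.isCompact
      exact Metric.isClosed_closedBall.inter (isClosed_le continuous_const
        (continuous_const.dist continuous_id))
    · rintro z ⟨hz1, hz2⟩
      apply isOpen_singleton_of_notMem_closure
      intro hzY
      have hzlt : dist ((⇑f)^[j] x) z < e j := by
        calc dist ((⇑f)^[j] x) z ≤ ε'/2 := by
              rw [Metric.mem_closedBall] at hz1; rwa [dist_comm]
          _ < ε' := by linarith
          _ ≤ e j := hε'le j (Finset.mem_range.mpr hj)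
      have heq := he2 j z hzY hzlt
      rw [heq] at hz2
      simp only [Set.mem_setOf_eq, dist_self] at hz2
      linarith
  -- the finite set F of orbits of points of A
  set F : Set X := ⋃ z ∈ A, {w : X | ∃ r : ℕ, (⇑f)^[r] z = w} with hFdef
  have hFfin : F.Finite := by
    apply hAfin.biUnion
    intro z _
    obtain ⟨q, hq1, hq⟩ := hper z
    exact orbit_finite hq1 hq
  -- main claim : every sensitivity witness close to x lies in F
  have hmain : ∀ y : X, dist x y ≤ b →
      (∃ i : ℕ, a < dist ((⇑f)^[i] x) ((⇑f)^[i] y)) → y ∈ F := by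
    rintro y hxy ⟨i0, hi0⟩
    have hex : ∃ i, b < dist ((⇑f)^[i] x) ((⇑f)^[i] y) := ⟨i0, lt_of_le_of_lt hba hi0⟩
    classical
    set m := Nat.find hex with hmdef
    have hm : b < dist ((⇑f)^[m] x) ((⇑f)^[m] y) := Nat.find_spec hex
    have hm0 : m ≠ 0 := by
      intro h0
      rw [h0] at hm
      simp only [Function.iterate_zero_apply] at hm
      linarith
    obtain ⟨k, hk⟩ := Nat.exists_eq_succ_of_ne_zero hm0
    have hk' : ¬ b < dist ((⇑f)^[k] x) ((⇑f)^[k] y) := Nat.find_min hex (by omega)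
    push_neg at hk'
    have hstep : dist ((⇑f)^[m] x) ((⇑f)^[m] y) ≤ ε'/2 := by
      rw [hk, Function.iterate_succ_apply', Function.iterate_succ_apply']
      exact le_of_lt (hδspec (lt_of_le_of_lt hk' hbδ))
    set j := m % p with hjdef
    have hjp : j < p := Nat.mod_lt _ (by omega)
    have hmod : (⇑f)^[m] x = (⇑f)^[j] x := iterate_mod_eq' hpx m
    have hzA : (⇑f)^[m] y ∈ A := by
      apply Set.mem_biUnion (show j ∈ Set.Iio p from hjp)
      constructor
      · rw [Metric.mem_closedBall, dist_comm, ← hmod]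
        exact hstep
      · show b ≤ dist ((⇑f)^[j] x) ((⇑f)^[m] y)
        rw [← hmod]
        exact le_of_lt hm
    obtain ⟨q, hq1, hqy⟩ := hper y
    refine Set.mem_biUnion hzA ⟨q * m - m, ?_⟩
    have hle : m ≤ q * m := Nat.le_mul_of_pos_left m (by omega)
    rw [← Function.iterate_add_apply, Nat.sub_add_cancel hle, Function.iterate_mul]
    exact Function.IsFixedPt.iterate hqy m
  -- conclude
  set G : Set X := F \ {x} with hGdef
  have hGfin : G.Finite := hFfin.subset Set.diff_subset
  have hGclosed : IsClosed G := hGfin.isClosed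
  have hxG : x ∈ Gᶜ := fun h => h.2 rfl
  obtain ⟨c, hc, hcball⟩ := Metric.isOpen_iff.mp hGclosed.isOpen_compl x hxG
  obtain ⟨y, -, hxy, i, hi⟩ := hsen (min b (c/2)) (lt_min hb (by positivity))
  have hyF : y ∈ F := hmain y (le_trans hxy (min_le_left _ _)) ⟨i, hi⟩
  have hyx : y ≠ x := by
    rintro rfl
    simp only [dist_self] at hi
    linarith
  have hyG : y ∈ Gᶜ := hcball (by
    rw [Metric.mem_ball, dist_comm]
    calc dist x y ≤ min b (c/2) := hxy
      _ ≤ c/2 := min_le_right _ _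
      _ < c := by linarith)
  exact hyG ⟨hyF, hyx⟩
end

section
/- Let f : X → X be an expansive homeomorphism of a compact metric space. If X = Per(f), i.e., every point of X is periodic, then X is a finite set. -/
open Metric Filter Function Set

variable {X : Type*} [MetricSpace X]

/-!
If every point is periodic, the full orbit of a pair of points is already traced out by its
forward half, and also by its backward half. So an expansive constant `e` separates any two
distinct points at some positive time, and no two distinct points stay `e`-close at all negative
times. On an infinite compact space the first property contradicts the second: take `y k → x`
with `y k ≠ x`, let `j k` be the first time at which the orbits of `y k` and `x` are `e`-apart,
and take a limit point of the pairs `(f^[j k] (y k), f^[j k] x)`. It is a pair of distinct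
points, and because `j k → ∞` their backward orbits stay `e`-close.
-/

open Topology

theorem Function.LeftInverse.iterate_iterate_of_le {α : Type*} {g h : α → α}
    (hgh : LeftInverse g h) {m n : ℕ} (hmn : m ≤ n) (x : α) :
    g^[m] (h^[n] x) = h^[n - m] x := by
  rw [← Nat.add_sub_cancel' hmn, iterate_add_apply, Nat.add_sub_cancel_left]
  exact hgh.iterate m _

theorem Function.LeftInverse.isPeriodicPt {α : Type*} {g h : α → α}
    (hgh : LeftInverse g h) {P : ℕ} {x : α} (hx : IsPeriodicPt h P x) :
    IsPeriodicPt g P x := by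
  have h := hgh.iterate_iterate_of_le (le_refl P) x
  rwa [hx.eq, Nat.sub_self, iterate_zero_apply] at h

theorem Function.LeftInverse.iterate_eq_iterate_of_isPeriodicPt {α : Type*} {g h : α → α}
    (hgh : LeftInverse g h) {P : ℕ} (hP : 0 < P) {x : α} (hx : IsPeriodicPt h P x) (m : ℕ) :
    g^[m] x = h^[P * m - m] x := by
  rw [← hgh.iterate_iterate_of_le (Nat.le_mul_of_pos_left m hP), (hx.mul_const m).eq]

theorem exists_isPeriodicPt_of_mem_Per {α : Type*} {f : α → α} {x y : α} (hx : x ∈ Per f)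
    (hy : y ∈ Per f) :
    ∃ P, 0 < P ∧ IsPeriodicPt f P x ∧ IsPeriodicPt f P y := by
  obtain ⟨a, ha, hxa⟩ := hx
  obtain ⟨b, hb, hyb⟩ := hy
  exact ⟨a * b, Nat.mul_pos ha hb, IsPeriodicPt.mul_const hxa b, IsPeriodicPt.const_mul hyb a⟩

theorem exists_iterate_eq_ziter (f : X ≃ₜ X) {P : ℕ} (hP : 0 < P) {x y : X}
    (hx : IsPeriodicPt f P x) (hy : IsPeriodicPt f P y) (i : ℤ) :
    ∃ n : ℕ, ziter f i x = f^[n] x ∧ ziter f i y = f^[n] y := by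
  have hinv : LeftInverse f.symm f := f.symm_apply_apply
  unfold ziter
  split_ifs
  · exact ⟨_, rfl, rfl⟩
  · exact ⟨_, hinv.iterate_eq_iterate_of_isPeriodicPt hP hx _,
      hinv.iterate_eq_iterate_of_isPeriodicPt hP hy _⟩

theorem exists_symm_iterate_eq_ziter (f : X ≃ₜ X) {P : ℕ} (hP : 0 < P) {x y : X}
    (hx : IsPeriodicPt f P x) (hy : IsPeriodicPt f P y) (i : ℤ) :
    ∃ n : ℕ, ziter f i x = f.symm^[n] x ∧ ziter f i y = f.symm^[n] y := by
  have hinv : LeftInverse f f.symm := f.apply_symm_apply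
  have hinv' : LeftInverse f.symm f := f.symm_apply_apply
  unfold ziter
  split_ifs
  · exact ⟨_, hinv.iterate_eq_iterate_of_isPeriodicPt hP (hinv'.isPeriodicPt hx) _,
      hinv.iterate_eq_iterate_of_isPeriodicPt hP (hinv'.isPeriodicPt hy) _⟩
  · exact ⟨_, rfl, rfl⟩

theorem tendsto_atTop_of_lt_dist_iterate {f : X → X} (hf : Continuous f) {x : X} {y : ℕ → X}
    (hy : Tendsto y atTop (𝓝 x)) {c : ℝ} (hc : 0 < c) {j : ℕ → ℕ}
    (hj : ∀ k, c < dist (f^[j k] (y k)) (f^[j k] x)) :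
    Tendsto j atTop atTop := by
  suffices Tendsto j atTop cofinite by rwa [Nat.cofinite_eq_atTop] at this
  refine le_cofinite_iff_eventually_ne.2 fun m => eventually_map.2 ?_
  have hdist : Tendsto (fun k => dist (f^[m] (y k)) (f^[m] x)) atTop (𝓝 0) :=
    tendsto_iff_dist_tendsto_zero.1 (((hf.iterate m).tendsto x).comp hy)
  filter_upwards [hdist.eventually (gt_mem_nhds hc)] with k hk hjk
  exact (hj k).not_gt (hjk ▸ hk)

theorem Homeomorph.exists_ne_forall_dist_symm_iterate_le [CompactSpace X] [Infinite X]
    (f : X ≃ₜ X) {c : ℝ} (hc : 0 < c)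
    (hsep : ∀ x y : X, x ≠ y → ∃ n : ℕ, c < dist (f^[n] x) (f^[n] y)) :
    ∃ p q : X, p ≠ q ∧ ∀ n : ℕ, dist (f.symm^[n] p) (f.symm^[n] q) ≤ c := by
  obtain ⟨x, hx⟩ := exists_nhds_ne_neBot X
  obtain ⟨y, hyx, hy⟩ := mem_closure_iff_seq_limit.1 (mem_closure_iff_nhdsWithin_neBot.2 hx)
  have hfirst : ∀ k, ∃ n, c < dist (f^[n] (y k)) (f^[n] x) ∧
      ∀ m < n, dist (f^[m] (y k)) (f^[m] x) ≤ c := fun k => by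
    classical
    have h := hsep _ _ (hyx k)
    exact ⟨Nat.find h, Nat.find_spec h, fun m hm => not_lt.1 (Nat.find_min h hm)⟩
  choose j hj_sep hj_close using hfirst
  have hj : Tendsto j atTop atTop := tendsto_atTop_of_lt_dist_iterate f.continuous hy hc hj_sep
  obtain ⟨⟨p, q⟩, φ, hφ, hlim⟩ :=
    CompactSpace.tendsto_subseq fun k => (f^[j k] (y k), f^[j k] x)
  have hjφ := hj.comp hφ.tendsto_atTop
  have hsymm : LeftInverse f.symm f := f.symm_apply_apply
  refine ⟨f.symm p, f.symm q, ?_, fun n => ?_⟩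
  · have hpq : c ≤ dist p q :=
      ge_of_tendsto' (hlim.fst_nhds.dist hlim.snd_nhds) fun k => (hj_sep _).le
    refine f.symm.injective.ne ?_
    rintro rfl
    rw [dist_self] at hpq
    linarith
  · rw [← iterate_succ_apply, ← iterate_succ_apply]
    have hcont := (f.symm.continuous.iterate (n + 1)).tendsto
    refine le_of_tendsto (((hcont p).comp hlim.fst_nhds).dist ((hcont q).comp hlim.snd_nhds)) ?_
    filter_upwards [hjφ.eventually_ge_atTop (n + 1)] with k hk
    simp only [comp_apply] at hk ⊢
    rw [hsymm.iterate_iterate_of_le hk, hsymm.iterate_iterate_of_le hk]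
    exact hj_close _ _ (by omega)

theorem stmt_15 [CompactSpace X] (f : X ≃ₜ X) (hexp : Expansive f)
    (hper : ∀ x : X, x ∈ Per ⇑f) :
    Finite X := by
  obtain ⟨e, he, hE⟩ := hexp
  by_contra hfin
  have : Infinite X := not_finite_iff_infinite.1 hfin
  have hsep : ∀ x y : X, x ≠ y → ∃ n : ℕ, e < dist (f^[n] x) (f^[n] y) := by
    intro x y hxy
    by_contra! hclose
    obtain ⟨P, hP, hx, hy⟩ := exists_isPeriodicPt_of_mem_Per (hper x) (hper y)
    refine hxy (hE x y fun i => ?_)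
    obtain ⟨n, hxn, hyn⟩ := exists_iterate_eq_ziter f hP hx hy i
    rw [hxn, hyn]
    exact hclose n
  obtain ⟨p, q, hpq, hclose⟩ := f.exists_ne_forall_dist_symm_iterate_le he hsep
  obtain ⟨P, hP, hp, hq⟩ := exists_isPeriodicPt_of_mem_Per (hper p) (hper q)
  refine hpq (hE p q fun i => ?_)
  obtain ⟨n, hpn, hqn⟩ := exists_symm_iterate_eq_ziter f hP hp hq i
  rw [hpn, hqn]
  exact hclose n
end

section
/- Let f : X → X be an expansive homeomorphism with expansive constant e > 0. If every point of X is periodic, then W_e^s(x) = {x} for every x ∈ X, where W_e^s(x) = {y : sup_{i≥0} d(f^i(x), f^i(y)) ≤ e}; consequently, for all x ≠ y there exists i ≥ 0 with d(f^i(x), f^i(y)) > e. -/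
open Metric Filter Function Set

variable {X : Type*} [MetricSpace X]

/-- Closed r-neighborhood of a set. -/

lemma ziter_eq_iterate (f : X ≃ₜ X) (N : ℕ) (hN : 1 ≤ N) (i : ℤ) :
    ∃ m : ℕ, ∀ z : X, (⇑f)^[N] z = z → ziter f i z = (⇑f)^[m] z := by
  obtain ⟨n, rfl | rfl⟩ := i.eq_nat_or_neg
  · exact ⟨n, fun z _ => by simp [ziter]⟩
  · refine ⟨N * n - n, fun z hz => ?_⟩
    rcases Nat.eq_zero_or_pos n with rfl | hn
    · simp [ziter]
    have hneg : ¬ (0 ≤ (-(n:ℤ))) := by omega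
    have hfix : (⇑f)^[N * n] z = z := by
      rw [Function.iterate_mul]; exact Function.iterate_fixed hz n
    have hNn : n ≤ N * n := Nat.le_mul_of_pos_left n hN
    have hinj : Function.Injective ((⇑f)^[n]) := (f.injective).iterate n
    apply hinj
    have h1 : (⇑f)^[n] ((⇑f.symm)^[n] z) = z := by
      have : Function.LeftInverse ⇑f ⇑f.symm := f.apply_symm_apply
      exact this.iterate n z
    have h2 : (⇑f)^[n] ((⇑f)^[N * n - n] z) = z := by
      rw [← Function.iterate_add_apply, Nat.add_sub_cancel' hNn]; exact hfix
    simp only [ziter, hneg, if_false, ite_false, neg_neg, Int.toNat_natCast]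
    rw [h1, h2]

theorem stmt_16 [CompactSpace X] (f : X ≃ₜ X) (e : ℝ) (he : 0 < e)
    (hexp : ∀ x y : X, (∀ i : ℤ, dist (ziter f i x) (ziter f i y) ≤ e) → x = y)
    (hper : ∀ x : X, x ∈ Per ⇑f) :
    (∀ x : X, {y : X | ∀ i : ℕ, dist ((⇑f)^[i] x) ((⇑f)^[i] y) ≤ e} = {x}) ∧
    (∀ x y : X, x ≠ y → ∃ i : ℕ, e < dist ((⇑f)^[i] x) ((⇑f)^[i] y)) := by
  have key : ∀ x : X, {y : X | ∀ i : ℕ, dist ((⇑f)^[i] x) ((⇑f)^[i] y) ≤ e} = {x} := by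
    intro x
    ext y
    simp only [Set.mem_setOf_eq, Set.mem_singleton_iff]
    constructor
    · intro h
      obtain ⟨p, hp1, hpx⟩ := hper x
      obtain ⟨q, hq1, hqy⟩ := hper y
      have hN1 : 1 ≤ p * q := Nat.one_le_iff_ne_zero.2 (by positivity)
      have hx : (⇑f)^[p * q] x = x := by
        rw [Function.iterate_mul]; exact Function.iterate_fixed hpx q
      have hy : (⇑f)^[p * q] y = y := by
        rw [mul_comm, Function.iterate_mul]; exact Function.iterate_fixed hqy p
      refine (hexp x y fun i => ?_).symm
      obtain ⟨m, hm⟩ := ziter_eq_iterate f (p * q) hN1 i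
      rw [hm x hx, hm y hy]
      exact h m
    · rintro rfl
      intro i; simp [he.le]
  refine ⟨key, fun x y hxy => ?_⟩
  by_contra hc
  push_neg at hc
  have : y ∈ ({x} : Set X) := by rw [← key x]; exact hc
  exact hxy (this.symm)
end

section
/- There exist a compact metric space X ⊆ [0,1]² and a homeomorphism f : X → X with a fixed point Λ = {(0,0)} such that f|_Λ is expansive, h_top(f|_{Λ_ε}) ≥ log 2 for every ε > 0 where Λ_ε = ⋂_{i∈ℤ} f^i(B_ε(Λ)), and yet Sen(f|_Λ) = ∅. (Construction: X = {(0,0)} ∪ ⋃_{n≥1} {(1/n, y/n) : y ∈ C} with C the Cantor set, f fixing (0,0) and acting on each slice {1/n} × C/n as a conjugate of the full 2-shift.) -/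
open Metric Filter Function Set

variable {X : Type*} [MetricSpace X]

/-- Maximal cardinality of an (n,r)-separated subset of K. -/
noncomputable def sepNum (f : X → X) (K : Set X) (n : ℕ) (r : ℝ) : ℕ :=
  sSup {N : ℕ | ∃ E : Finset X, (E : Set X) ⊆ K ∧ E.card = N ∧
    ∀ x ∈ E, ∀ y ∈ E, x ≠ y → ∃ i < n, r < dist (f^[i] x) (f^[i] y)}

noncomputable def entAt (f : X → X) (K : Set X) (r : ℝ) : ℝ :=
  Filter.limsup (fun n : ℕ => Real.log (sepNum f K n r) / n) Filter.atTop

/-- Topological entropy of f on K (via (n,r)-separated sets). -/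
noncomputable def htop (f : X → X) (K : Set X) : ℝ :=
  ⨆ r : {r : ℝ // 0 < r}, entAt f K r

/-!
Let `X` be the comb of rescaled Cantor sets `{1/n} × C/n` accumulating at the origin, with `f`
acting on each slice as the two-sided full shift (coded by ternary digits). On the slice at height
`a` the `2 ^ N` words of length `N` give an `(N, a/8)`-separated set, and every `Λ_ε` contains a
whole slice since `f` preserves the height; hence `log 2 ≤ h_top(f|Λ_ε)`. The supremum over `r`
defining `h_top` is finite because `f` is `55`-Lipschitz on a subset of the unit square: an
`(n, r)`-separated set has pairwise distances `≥ r / 55 ^ n`, so a grid count bounds the entropy by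
`2 log 55`. Expansiveness and the absence of sensitive points are trivial on the one-point `Λ`.
-/

open Real Topology

section Entropy

variable {f : X → X} {K : Set X} {n : ℕ} {r : ℝ}

def IsOrbitSeparated (f : X → X) (n : ℕ) (r : ℝ) (E : Finset X) : Prop :=
  ∀ x ∈ E, ∀ y ∈ E, x ≠ y → ∃ i < n, r < dist (f^[i] x) (f^[i] y)

lemma sepNum_le {B : ℕ} (hB : ∀ E : Finset X, IsOrbitSeparated f n r E → E.card ≤ B) :
    sepNum f K n r ≤ B :=
  csSup_le ⟨0, ∅, by simp, rfl, by simp⟩ (by rintro _ ⟨E, -, rfl, hE⟩; exact hB E hE)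

lemma card_le_sepNum {B : ℕ} (hB : ∀ E : Finset X, IsOrbitSeparated f n r E → E.card ≤ B)
    (hr : 0 ≤ r) {ι : Type*} [Fintype ι] (g : ι → X) (hgK : ∀ i, g i ∈ K)
    (hg : ∀ i j, i ≠ j → ∃ k < n, r < dist (f^[k] (g i)) (f^[k] (g j))) :
    Fintype.card ι ≤ sepNum f K n r := by
  have hinj : Function.Injective g := by
    intro i j hij
    by_contra hne
    obtain ⟨k, -, hk⟩ := hg i j hne
    rw [hij, dist_self] at hk
    exact hk.not_ge hr
  refine le_csSup ⟨B, by rintro _ ⟨E, -, rfl, hE⟩; exact hB E hE⟩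
    ⟨Finset.univ.map ⟨g, hinj⟩, ?_, by simp, ?_⟩
  · rintro _ hx
    obtain ⟨i, -, rfl⟩ := Finset.mem_map.mp hx
    exact hgK i
  · simp only [Finset.mem_map, Finset.mem_univ, true_and, Function.Embedding.coeFn_mk]
    rintro _ ⟨i, rfl⟩ _ ⟨j, rfl⟩ hij
    exact hg i j fun h => hij (h ▸ rfl)

lemma log_le_entAt {b : ℕ} (hb : 0 < b)
    (hbdd : IsBoundedUnder (· ≤ ·) atTop fun n : ℕ => Real.log (sepNum f K n r) / n)
    (h : ∀ n, b ^ n ≤ sepNum f K n r) : Real.log b ≤ entAt f K r := by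
  refine le_limsup_of_frequently_le (Eventually.frequently ?_) hbdd
  filter_upwards [eventually_ge_atTop 1] with n hn
  have hn' : (0 : ℝ) < n := by exact_mod_cast hn
  rw [le_div_iff₀ hn', mul_comm, ← Real.log_pow]
  exact Real.log_le_log (by positivity) (by exact_mod_cast h n)

lemma entAt_le_of_tendsto {c : ℝ} {u : ℕ → ℝ} (hu : Tendsto u atTop (𝓝 c))
    (h : (fun n : ℕ => Real.log (sepNum f K n r) / n) ≤ᶠ[atTop] u) : entAt f K r ≤ c :=
  (limsup_le_limsup h (isCoboundedUnder_le_of_le atTop fun n =>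
    div_nonneg (Real.log_natCast_nonneg _) n.cast_nonneg) hu.isBoundedUnder_le).trans
    hu.limsup_eq.le

lemma entAt_le_htop {B : ℝ} (hB : ∀ r > 0, entAt f K r ≤ B) (hr : 0 < r) :
    entAt f K r ≤ htop f K :=
  le_ciSup (f := fun r : {r : ℝ // 0 < r} => entAt f K r)
    ⟨B, by rintro _ ⟨r, rfl⟩; exact hB r r.2⟩ ⟨r, hr⟩

lemma IsOrbitSeparated.div_pow_lt_dist {L : NNReal} (hf : LipschitzWith L f) (hL : 1 ≤ L)
    {E : Finset X} (hE : IsOrbitSeparated f n r E) {x y : X} (hx : x ∈ E) (hy : y ∈ E)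
    (hxy : x ≠ y) :
    r / L ^ n < dist x y := by
  obtain ⟨i, hi, hr⟩ := hE x hx y hy hxy
  have hL' : (1 : ℝ) ≤ L := hL
  rw [div_lt_iff₀' (by positivity)]
  calc r < dist (f^[i] x) (f^[i] y) := hr
    _ ≤ L ^ i * dist x y := by exact_mod_cast (hf.iterate i).dist_le_mul x y
    _ ≤ L ^ n * dist x y := by gcongr

end Entropy

lemma abs_sub_lt_of_floor_div_eq {δ u v : ℝ} (hδ : 0 < δ) (hu : 0 ≤ u) (hv : 0 ≤ v)
    (h : ⌊u / δ⌋₊ = ⌊v / δ⌋₊) : |u - v| < δ := by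
  have h' : ⌊u / δ⌋ = ⌊v / δ⌋ := by
    rw [← Int.natCast_floor_eq_floor (by positivity),
      ← Int.natCast_floor_eq_floor (by positivity), h]
  have := Int.abs_sub_lt_one_of_floor_eq_floor h'
  rwa [← sub_div, abs_div, abs_of_pos hδ, div_lt_one hδ] at this

/-- `δ`-separated points lie in distinct cells of the `δ`-grid. -/
lemma card_le_of_le_dist {S : Set (ℝ × ℝ)} (hS : S ⊆ Icc (0, 0) (1, 1)) {δ : ℝ} (hδ : 0 < δ)
    (E : Finset S) (hE : ∀ x ∈ E, ∀ y ∈ E, x ≠ y → δ ≤ dist x y) :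
    E.card ≤ (⌊δ⁻¹⌋₊ + 1) ^ 2 := by
  let cell : S → ℕ × ℕ := fun x => (⌊(x : ℝ × ℝ).1 / δ⌋₊, ⌊(x : ℝ × ℝ).2 / δ⌋₊)
  have hcoord (x : S) :
      0 ≤ (x : ℝ × ℝ).1 ∧ (x : ℝ × ℝ).1 ≤ 1 ∧ 0 ≤ (x : ℝ × ℝ).2 ∧ (x : ℝ × ℝ).2 ≤ 1 :=
    ⟨(hS x.2).1.1, (hS x.2).2.1, (hS x.2).1.2, (hS x.2).2.2⟩
  have hmaps : ∀ x ∈ E, cell x ∈ Finset.range (⌊δ⁻¹⌋₊ + 1) ×ˢ Finset.range (⌊δ⁻¹⌋₊ + 1) := by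
    intro x _
    obtain ⟨-, h1, -, h2⟩ := hcoord x
    simp only [cell, Finset.mem_product, Finset.mem_range, Nat.lt_succ_iff, ← one_div]
    exact ⟨Nat.floor_le_floor (by gcongr), Nat.floor_le_floor (by gcongr)⟩
  have hinj : Set.InjOn cell E := by
    intro x hx y hy hxy
    by_contra hne
    obtain ⟨hx1, -, hx2, -⟩ := hcoord x
    obtain ⟨hy1, -, hy2, -⟩ := hcoord y
    have h1 := abs_sub_lt_of_floor_div_eq hδ hx1 hy1 (congrArg Prod.fst hxy)
    have h2 := abs_sub_lt_of_floor_div_eq hδ hx2 hy2 (congrArg Prod.snd hxy)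
    have : dist x y < δ := by
      rw [Subtype.dist_eq, Prod.dist_eq, Real.dist_eq, Real.dist_eq]
      exact max_lt h1 h2
    exact (hE x hx y hy hne).not_gt this
  calc E.card ≤ (Finset.range (⌊δ⁻¹⌋₊ + 1) ×ˢ Finset.range (⌊δ⁻¹⌋₊ + 1)).card :=
        Finset.card_le_card_of_injOn cell hmaps hinj
    _ = (⌊δ⁻¹⌋₊ + 1) ^ 2 := by simp [sq]

lemma tendsto_add_div_natCast (a b : ℝ) : Tendsto (fun n : ℕ => a + b / n) atTop (𝓝 a) := by
  simpa using tendsto_const_nhds.add (tendsto_const_div_atTop_nhds_zero_nat b)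

section LipschitzOnSquare

variable {S : Set (ℝ × ℝ)} {f : S → S} {L : NNReal} {K : Set S} {r : ℝ}

lemma card_le_of_isOrbitSeparated (hS : S ⊆ Icc (0, 0) (1, 1)) (hf : LipschitzWith L f)
    (hL : 1 ≤ L) (hr : 0 < r) {n : ℕ} {E : Finset S} (hE : IsOrbitSeparated f n r E) :
    E.card ≤ (⌊L ^ n / r⌋₊ + 1) ^ 2 := by
  have hL' : (0 : ℝ) < L := lt_of_lt_of_le one_pos hL
  have := card_le_of_le_dist hS (δ := r / L ^ n) (by positivity) E fun x hx y hy hxy =>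
    (hE.div_pow_lt_dist hf hL hx hy hxy).le
  rwa [inv_div] at this

lemma log_sepNum_le (hS : S ⊆ Icc (0, 0) (1, 1)) (hf : LipschitzWith L f) (hL : 1 ≤ L)
    (hr : 0 < r) (n : ℕ) :
    Real.log (sepNum f K n r) ≤ 2 * (n * Real.log L + Real.log (r⁻¹ + 1)) := by
  have hL' : (1 : ℝ) ≤ L := hL
  have hpow : (1 : ℝ) ≤ L ^ n := one_le_pow₀ hL'
  have hcard : (sepNum f K n r : ℝ) ≤ (L ^ n * (r⁻¹ + 1)) ^ 2 := by
    have h := sepNum_le (K := K) (n := n) fun E hE => card_le_of_isOrbitSeparated hS hf hL hr hE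
    calc (sepNum f K n r : ℝ) ≤ ((⌊L ^ n / r⌋₊ : ℝ) + 1) ^ 2 := by exact_mod_cast h
      _ ≤ (L ^ n / r + 1) ^ 2 := by gcongr; exact Nat.floor_le (by positivity)
      _ ≤ (L ^ n * (r⁻¹ + 1)) ^ 2 := by
        gcongr
        rw [mul_add, div_eq_mul_inv]
        linarith
  have hrhs : Real.log ((L ^ n * (r⁻¹ + 1)) ^ 2) = 2 * (n * Real.log L + Real.log (r⁻¹ + 1)) := by
    rw [Real.log_pow, Real.log_mul (by positivity) (by positivity), Real.log_pow]
    push_cast; ring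
  rw [← hrhs]
  rcases Nat.eq_zero_or_pos (sepNum f K n r) with h0 | hpos
  · rw [h0, Nat.cast_zero, Real.log_zero]
    exact Real.log_nonneg (one_le_pow₀ (one_le_mul_of_one_le_of_one_le hpow
      (le_add_of_nonneg_left (inv_pos.mpr hr).le)))
  · exact Real.log_le_log (by exact_mod_cast hpos) hcard

lemma log_sepNum_div_le (hS : S ⊆ Icc (0, 0) (1, 1)) (hf : LipschitzWith L f) (hL : 1 ≤ L)
    (hr : 0 < r) :
    (fun n : ℕ => Real.log (sepNum f K n r) / n) ≤ᶠ[atTop]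
      fun n : ℕ => 2 * Real.log L + 2 * Real.log (r⁻¹ + 1) / n := by
  filter_upwards [eventually_gt_atTop 0] with n hn
  have hn' : (0 : ℝ) < n := by exact_mod_cast hn
  rw [div_le_iff₀ hn', add_mul, div_mul_cancel₀ _ hn'.ne']
  linarith [log_sepNum_le hS hf hL (K := K) hr n]

lemma isBoundedUnder_log_sepNum (hS : S ⊆ Icc (0, 0) (1, 1)) (hf : LipschitzWith L f)
    (hL : 1 ≤ L) (hr : 0 < r) :
    IsBoundedUnder (· ≤ ·) atTop fun n : ℕ => Real.log (sepNum f K n r) / n :=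
  (tendsto_add_div_natCast _ _).isBoundedUnder_le.mono_le (log_sepNum_div_le hS hf hL hr)

lemma entAt_le_two_mul_log (hS : S ⊆ Icc (0, 0) (1, 1)) (hf : LipschitzWith L f) (hL : 1 ≤ L)
    (hr : 0 < r) : entAt f K r ≤ 2 * Real.log L :=
  entAt_le_of_tendsto (tendsto_add_div_natCast _ _) (log_sepNum_div_le hS hf hL hr)

end LipschitzOnSquare

lemma expConstOn_singleton (f : X ≃ₜ X) (p : X) (e : ℝ) : ExpConstOn f {p} e :=
  fun _ _ hx hy _ => by simpa [ziter] using (hx 0).trans (hy 0).symm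

lemma senOn_singleton (f : X → X) (p : X) : SenOn f {p} = ∅ := by
  refine eq_empty_of_forall_notMem fun x ⟨hx, a, ha, hsen⟩ => ?_
  obtain ⟨y, hy, -, i, hi⟩ := hsen 1 one_pos
  rw [mem_singleton_iff.mp hx, mem_singleton_iff.mp hy, dist_self] at hi
  exact hi.not_gt ha

noncomputable def cantorCode (u : ℕ → Bool) : ℝ := ofDigits fun i => cond (u i) (2 : Fin 3) 0

lemma cantorCode_nonneg (u : ℕ → Bool) : 0 ≤ cantorCode u := ofDigits_nonneg _

lemma cantorCode_le_one (u : ℕ → Bool) : cantorCode u ≤ 1 := ofDigits_le_one _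

lemma continuous_cantorCode : Continuous cantorCode :=
  continuous_ofDigits.comp <| continuous_pi fun i =>
    (continuous_of_discreteTopology (f := fun b : Bool => cond b (2 : Fin 3) 0)).comp
      (continuous_apply i)

lemma abs_cantorCode_sub_le {u v : ℕ → Bool} {n : ℕ} (h : ∀ i < n, u i = v i) :
    |cantorCode u - cantorCode v| ≤ (3⁻¹ : ℝ) ^ n := by
  simpa [cantorCode, inv_pow] using
    abs_ofDigits_sub_ofDigits_le (b := 3) (n := n) fun i hi => by rw [h i hi]

lemma cantorCode_eq_add (u : ℕ → Bool) (n : ℕ) :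
    cantorCode u = ∑ i ∈ Finset.range n, ofDigitsTerm (fun i => cond (u i) (2 : Fin 3) 0) i +
      (3⁻¹ : ℝ) ^ n * cantorCode fun i => u (i + n) := by
  simpa [cantorCode, inv_pow] using
    ofDigits_eq_sum_add_ofDigits (fun i => cond (u i) (2 : Fin 3) 0) n

lemma inv_three_le_abs_cantorCode_sub {u v : ℕ → Bool} (h : u 0 ≠ v 0) :
    3⁻¹ ≤ |cantorCode u - cantorCode v| := by
  wlog huv : u 0 = true ∧ v 0 = false generalizing u v
  · rw [abs_sub_comm]
    exact this h.symm (by cases hu : u 0 <;> cases hv : v 0 <;> simp_all)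
  -- the first ternary digit puts `cantorCode u` in `[2/3, 1]` and `cantorCode v` in `[0, 1/3]`
  have hu := cantorCode_eq_add u 1
  have hv := cantorCode_eq_add v 1
  simp only [Finset.range_one, Finset.sum_singleton, ofDigitsTerm, huv, pow_one] at hu hv
  norm_num at hu hv
  rw [abs_of_nonneg] <;>
  linarith [cantorCode_nonneg fun i => u (i + 1), cantorCode_le_one fun i => v (i + 1)]

lemma le_abs_cantorCode_sub {u v : ℕ → Bool} {n : ℕ} (h : ∀ i < n, u i = v i) (hn : u n ≠ v n) :
    (3⁻¹ : ℝ) ^ (n + 1) ≤ |cantorCode u - cantorCode v| := by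
  have hsum : ∑ i ∈ Finset.range n, ofDigitsTerm (fun i => cond (u i) (2 : Fin 3) 0) i =
      ∑ i ∈ Finset.range n, ofDigitsTerm (fun i => cond (v i) (2 : Fin 3) 0) i :=
    Finset.sum_congr rfl fun i hi => by simp [ofDigitsTerm, h i (Finset.mem_range.mp hi)]
  have htail := inv_three_le_abs_cantorCode_sub (u := fun i => u (i + n)) (v := fun i => v (i + n))
    (by simpa using hn)
  rw [cantorCode_eq_add u n, cantorCode_eq_add v n, hsum, add_sub_add_left_eq_sub, ← mul_sub,
    abs_mul, abs_of_pos (by positivity), pow_succ]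
  gcongr

lemma le_abs_cantorCode_sub_of_ne {u v : ℕ → Bool} (h : u ≠ v) :
    (3⁻¹ : ℝ) ^ (PiNat.firstDiff u v + 1) ≤ |cantorCode u - cantorCode v| :=
  le_abs_cantorCode_sub (fun _ hi => PiNat.apply_eq_of_lt_firstDiff hi) (PiNat.apply_firstDiff_ne h)

lemma cantorCode_injective : Function.Injective cantorCode := by
  intro u v huv
  by_contra h
  have := le_abs_cantorCode_sub_of_ne h
  rw [huv, sub_self, abs_zero] at this
  exact (pow_pos (by norm_num) _).not_ge this

lemma abs_cantorCode_sub_le_of_agree {d : ℕ} {u v u' v' : ℕ → Bool}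
    (h : ∀ n, (∀ i < n, u i = v i) → ∀ i < n - d, u' i = v' i) :
    |cantorCode u' - cantorCode v'| ≤ 3 ^ (d + 1) * |cantorCode u - cantorCode v| := by
  rcases eq_or_ne u v with rfl | huv
  · have : u' = v' := funext fun i => h (i + d + 1) (fun _ _ => rfl) i (by omega)
    simp [this]
  -- with `m` the first disagreement of `u`, `v`: `|Δu| ≥ 3⁻¹ ^ (m + 1)` and `|Δu'| ≤ 3⁻¹ ^ (m - d)`
  set m := PiNat.firstDiff u v
  have hclose := abs_cantorCode_sub_le (h m fun _ hi => PiNat.apply_eq_of_lt_firstDiff hi)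
  have hpow : (3⁻¹ : ℝ) ^ (m - d) ≤ 3 ^ (d + 1) * 3⁻¹ ^ (m + 1) := by
    rw [inv_pow, inv_pow, ← div_eq_mul_inv, inv_le_comm₀ (by positivity) (by positivity), inv_div,
      div_le_iff₀ (by positivity), ← pow_add]
    exact pow_le_pow_right₀ (by norm_num) (by omega)
  calc |cantorCode u' - cantorCode v'| ≤ (3⁻¹ : ℝ) ^ (m - d) := hclose
    _ ≤ 3 ^ (d + 1) * 3⁻¹ ^ (m + 1) := hpow
    _ ≤ 3 ^ (d + 1) * |cantorCode u - cantorCode v| := by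
      gcongr; exact le_abs_cantorCode_sub_of_ne huv

lemma intEquivNat_eq_ite (j : ℤ) :
    Equiv.intEquivNat j = if 0 ≤ j then 2 * j.toNat else 2 * (-j).toNat - 1 := by
  cases j with
  | ofNat n => exact (if_pos (Int.natCast_nonneg n)).symm
  | negSucc n => change 2 * n + 1 = _; simp; omega

lemma intEquivNat_add_le (j : ℤ) {k : ℤ} (hk : |k| ≤ 1) :
    Equiv.intEquivNat (j + k) ≤ Equiv.intEquivNat j + 2 := by
  rw [intEquivNat_eq_ite, intEquivNat_eq_ite, abs_le] at *
  split_ifs <;> omega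

/-- The paper's `φ⁻¹`: the ternary digits are `2 * s j` for `j = 0, -1, 1, -2, 2, …`, the order
of `Equiv.intEquivNat`. -/
noncomputable def biCode (s : ℤ → Bool) : ℝ := cantorCode (s ∘ Equiv.intEquivNat.symm)

def twoSidedShift (k : ℤ) (s : ℤ → Bool) : ℤ → Bool := fun j => s (j + k)

@[simp]
lemma twoSidedShift_zero (s : ℤ → Bool) : twoSidedShift 0 s = s := by
  funext j; simp [twoSidedShift]

@[simp]
lemma twoSidedShift_twoSidedShift (k l : ℤ) (s : ℤ → Bool) :
    twoSidedShift k (twoSidedShift l s) = twoSidedShift (k + l) s := by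
  funext j; simp [twoSidedShift, add_assoc]

lemma biCode_nonneg (s : ℤ → Bool) : 0 ≤ biCode s := cantorCode_nonneg _

lemma biCode_le_one (s : ℤ → Bool) : biCode s ≤ 1 := cantorCode_le_one _

lemma continuous_biCode : Continuous biCode :=
  continuous_cantorCode.comp <| continuous_pi fun _ => continuous_apply _

lemma biCode_injective : Function.Injective biCode :=
  cantorCode_injective.comp Equiv.intEquivNat.symm.surjective.injective_comp_right

lemma inv_three_le_abs_biCode_sub {s t : ℤ → Bool} (h : s 0 ≠ t 0) :
    3⁻¹ ≤ |biCode s - biCode t| :=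
  inv_three_le_abs_cantorCode_sub h

lemma abs_biCode_twoSidedShift_sub_le {k : ℤ} (hk : |k| ≤ 1) (s t : ℤ → Bool) :
    |biCode (twoSidedShift k s) - biCode (twoSidedShift k t)| ≤ 27 * |biCode s - biCode t| := by
  have h := abs_cantorCode_sub_le_of_agree (d := 2) (u := s ∘ Equiv.intEquivNat.symm)
    (v := t ∘ Equiv.intEquivNat.symm) (u' := twoSidedShift k s ∘ Equiv.intEquivNat.symm)
    (v' := twoSidedShift k t ∘ Equiv.intEquivNat.symm) fun n hst i hi => ?_
  · rwa [show (3 : ℝ) ^ (2 + 1) = 27 by norm_num] at h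
  have hj := intEquivNat_add_le (Equiv.intEquivNat.symm i) hk
  rw [Equiv.apply_symm_apply] at hj
  simpa [twoSidedShift] using hst (Equiv.intEquivNat (Equiv.intEquivNat.symm i + k)) (by omega)

def combSlices : Set ℝ := insert 0 (range fun n : ℕ => ((n : ℝ) + 1)⁻¹)

lemma isCompact_combSlices : IsCompact combSlices :=
  Tendsto.isCompact_insert_range <| by
    simpa [one_div] using tendsto_one_div_add_atTop_nhds_zero_nat (𝕜 := ℝ)

lemma combSlices_subset_Icc : combSlices ⊆ Icc 0 1 := by
  rintro _ (rfl | ⟨n, rfl⟩)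
  · simp
  · exact ⟨by positivity, inv_le_one_of_one_le₀ (by simp)⟩

noncomputable def combPoint (a : ℝ) (s : ℤ → Bool) : ℝ × ℝ := (a, a * biCode s)

/-- The space `X = {(0,0)} ∪ ⋃ₙ {1/n} × C/n` of the paper (with slices indexed from `n = 0`). -/
def cantorComb : Set (ℝ × ℝ) :=
  (fun q : ℝ × (ℤ → Bool) => combPoint q.1 q.2) '' (combSlices ×ˢ univ)

lemma combPoint_mem_cantorComb {a : ℝ} (ha : a ∈ combSlices) (s : ℤ → Bool) :
    combPoint a s ∈ cantorComb :=
  ⟨(a, s), ⟨ha, mem_univ s⟩, rfl⟩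

lemma combPoint_zero (s : ℤ → Bool) : combPoint 0 s = (0, 0) := by simp [combPoint]

lemma zero_mem_cantorComb : ((0 : ℝ), (0 : ℝ)) ∈ cantorComb :=
  combPoint_zero (fun _ => false) ▸ combPoint_mem_cantorComb (mem_insert 0 _) _

lemma isCompact_cantorComb : IsCompact cantorComb :=
  (isCompact_combSlices.prod isCompact_univ).image <|
    continuous_fst.prodMk (continuous_fst.mul (continuous_biCode.comp continuous_snd))

lemma cantorComb_subset_Icc : cantorComb ⊆ Icc ((0 : ℝ), (0 : ℝ)) (1, 1) := by
  rintro _ ⟨⟨a, s⟩, ⟨ha, -⟩, rfl⟩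
  obtain ⟨ha0, ha1⟩ := combSlices_subset_Icc ha
  have hc0 := biCode_nonneg s
  have hc1 := biCode_le_one s
  refine ⟨⟨ha0, ?_⟩, ⟨ha1, ?_⟩⟩ <;> dsimp [combPoint] <;> nlinarith

lemma dist_combPoint_le {a : ℝ} (ha : 0 ≤ a) (b : ℝ) (s t : ℤ → Bool) :
    dist (combPoint a s) (combPoint b t) ≤ |a - b| + a * |biCode s - biCode t| := by
  have hb := abs_nonneg (a - b)
  have hc := abs_nonneg (biCode s - biCode t)
  have key : |a * biCode s - b * biCode t| ≤ |a - b| + a * |biCode s - biCode t| := by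
    calc |a * biCode s - b * biCode t|
        = |a * (biCode s - biCode t) + (a - b) * biCode t| := by ring_nf
      _ ≤ |a * (biCode s - biCode t)| + |(a - b) * biCode t| := abs_add_le _ _
      _ = a * |biCode s - biCode t| + |a - b| * biCode t := by
        rw [abs_mul, abs_mul, abs_of_nonneg ha, abs_of_nonneg (biCode_nonneg t)]
      _ ≤ |a - b| + a * |biCode s - biCode t| := by
        nlinarith [biCode_le_one t]
  rw [Prod.dist_eq, Real.dist_eq, Real.dist_eq]
  exact max_le (by dsimp [combPoint]; nlinarith) key

lemma mul_abs_biCode_sub_le {a : ℝ} (ha : 0 ≤ a) (b : ℝ) (s t : ℤ → Bool) :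
    a * |biCode s - biCode t| ≤ 2 * dist (combPoint a s) (combPoint b t) := by
  have h1 : |a - b| ≤ dist (combPoint a s) (combPoint b t) :=
    (le_max_left _ _ : dist a b ≤ _)
  have h2 : |a * biCode s - b * biCode t| ≤ dist (combPoint a s) (combPoint b t) :=
    (le_max_right _ _ : dist (a * biCode s) (b * biCode t) ≤ _)
  calc a * |biCode s - biCode t| = |a * (biCode s - biCode t)| := by
        rw [abs_mul, abs_of_nonneg ha]
    _ = |(a * biCode s - b * biCode t) - (a - b) * biCode t| := by ring_nf
    _ ≤ |a * biCode s - b * biCode t| + |(a - b) * biCode t| := abs_sub _ _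
    _ = |a * biCode s - b * biCode t| + |a - b| * biCode t := by
        rw [abs_mul, abs_of_nonneg (biCode_nonneg t)]
    _ ≤ 2 * dist (combPoint a s) (combPoint b t) := by
        nlinarith [biCode_nonneg t, biCode_le_one t, abs_nonneg (a - b)]

lemma dist_combPoint_zero {a : ℝ} (ha : 0 ≤ a) (s : ℤ → Bool) :
    dist (combPoint a s) (0, 0) = a := by
  have := mul_le_of_le_one_right ha (biCode_le_one s)
  rw [Prod.dist_eq, Real.dist_eq, Real.dist_eq]
  simp only [combPoint, sub_zero, abs_of_nonneg ha, abs_of_nonneg (mul_nonneg ha (biCode_nonneg s))]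
  exact max_eq_left this

/-- At `p.1 = 0` the junk value `p.2 / p.1 = 0` is harmless, since `combPoint 0 _ = (0, 0)`. -/
noncomputable def combShiftFun (k : ℤ) (p : ℝ × ℝ) : ℝ × ℝ :=
  combPoint p.1 (twoSidedShift k (Function.invFun biCode (p.2 / p.1)))

lemma combShiftFun_combPoint (k : ℤ) (a : ℝ) (s : ℤ → Bool) :
    combShiftFun k (combPoint a s) = combPoint a (twoSidedShift k s) := by
  rcases eq_or_ne a 0 with rfl | ha
  · simp [combShiftFun, combPoint_zero]
  · have : a * biCode s / a = biCode s := by field_simp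
    simp [combShiftFun, combPoint, this, Function.leftInverse_invFun biCode_injective s]

lemma mapsTo_combShiftFun (k : ℤ) : MapsTo (combShiftFun k) cantorComb cantorComb := by
  rintro _ ⟨⟨a, s⟩, ⟨ha, -⟩, rfl⟩
  rw [combShiftFun_combPoint]
  exact combPoint_mem_cantorComb ha _

noncomputable def combShiftMap (k : ℤ) : cantorComb → cantorComb :=
  (mapsTo_combShiftFun k).restrict

lemma combShiftMap_combShiftMap (k l : ℤ) (x : cantorComb) :
    combShiftMap k (combShiftMap l x) = combShiftMap (k + l) x := by
  obtain ⟨_, ⟨a, s⟩, -, rfl⟩ := x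
  apply Subtype.ext
  simp [combShiftMap, combShiftFun_combPoint]

lemma combShiftMap_zero : combShiftMap 0 = id := by
  funext x
  obtain ⟨_, ⟨a, s⟩, -, rfl⟩ := x
  apply Subtype.ext
  simp [combShiftMap, combShiftFun_combPoint]

/-- The ±1 shifts stretch codes by at most `27` and keep the slice coordinate, whence
`55 = 2 * 27 + 1`. -/
lemma lipschitzWith_combShiftMap {k : ℤ} (hk : |k| ≤ 1) : LipschitzWith 55 (combShiftMap k) := by
  refine LipschitzWith.of_dist_le_mul ?_
  rintro ⟨_, ⟨a, s⟩, ⟨ha, -⟩, rfl⟩ ⟨_, ⟨b, t⟩, -, rfl⟩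
  have ha0 := (combSlices_subset_Icc ha).1
  rw [Subtype.dist_eq, Subtype.dist_eq]
  simp only [combShiftMap, MapsTo.val_restrict_apply, combShiftFun_combPoint]
  have hab : |a - b| ≤ dist (combPoint a s) (combPoint b t) :=
    (le_max_left _ _ : dist a b ≤ _)
  calc dist (combPoint a (twoSidedShift k s)) (combPoint b (twoSidedShift k t))
      ≤ |a - b| + a * |biCode (twoSidedShift k s) - biCode (twoSidedShift k t)| :=
        dist_combPoint_le ha0 b _ _
    _ ≤ |a - b| + 27 * (a * |biCode s - biCode t|) := by
        have := abs_biCode_twoSidedShift_sub_le hk s t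
        nlinarith
    _ ≤ ((55 : NNReal) : ℝ) * dist (combPoint a s) (combPoint b t) := by
        have := mul_abs_biCode_sub_le ha0 b s t
        push_cast
        linarith

noncomputable def combShift : cantorComb ≃ₜ cantorComb where
  toFun := combShiftMap 1
  invFun := combShiftMap (-1)
  left_inv x := by simp [combShiftMap_combShiftMap, combShiftMap_zero]
  right_inv x := by simp [combShiftMap_combShiftMap, combShiftMap_zero]
  continuous_toFun := (lipschitzWith_combShiftMap (by norm_num)).continuous
  continuous_invFun := (lipschitzWith_combShiftMap (by norm_num)).continuous

lemma iterate_combShiftMap (k : ℤ) (n : ℕ) : (combShiftMap k)^[n] = combShiftMap (n * k) := by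
  induction n with
  | zero => simp [combShiftMap_zero]
  | succ n ih =>
    funext x
    rw [Function.iterate_succ_apply', ih, combShiftMap_combShiftMap]
    push_cast; ring_nf

lemma iterate_combShift (n : ℕ) : (⇑combShift)^[n] = combShiftMap n := by
  change (combShiftMap 1)^[n] = _
  simpa using iterate_combShiftMap 1 n

lemma iterate_combShift_symm (n : ℕ) : (⇑combShift.symm)^[n] = combShiftMap (-n) := by
  change (combShiftMap (-1))^[n] = _
  simpa using iterate_combShiftMap (-1) n

lemma ziter_combShift (i : ℤ) : ziter combShift i = combShiftMap i := by
  funext x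
  unfold ziter
  split_ifs with hi
  · rw [iterate_combShift, Int.toNat_of_nonneg hi]
  · rw [iterate_combShift_symm, Int.toNat_of_nonneg (by omega), neg_neg]

lemma combShift_zero : combShift ⟨(0, 0), zero_mem_cantorComb⟩ = ⟨(0, 0), zero_mem_cantorComb⟩ :=
  Subtype.ext (by simp [combShift, combShiftMap, combShiftFun, combPoint])

lemma lipschitzWith_combShift : LipschitzWith 55 combShift :=
  lipschitzWith_combShiftMap (by norm_num)

lemma coe_combShiftMap_mk (k : ℤ) {a : ℝ} (s : ℤ → Bool) (h : combPoint a s ∈ cantorComb) :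
    (combShiftMap k ⟨combPoint a s, h⟩ : ℝ × ℝ) = combPoint a (twoSidedShift k s) :=
  combShiftFun_combPoint k a s

/-- Two words of length `N` differing at `i`, written on the slice at height `a`, are `a / 6`
apart after `i` shifts. -/
lemma two_pow_le_sepNum_combShift {a : ℝ} (ha : a ∈ combSlices) (ha0 : 0 < a)
    {K : Set cantorComb} (hK : ∀ s, ⟨combPoint a s, combPoint_mem_cantorComb ha s⟩ ∈ K) (N : ℕ) :
    2 ^ N ≤ sepNum combShift K N (a / 8) := by
  have hcast : Function.Injective fun i : Fin N => (i : ℤ) :=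
    fun i j h => Fin.ext (by simpa using h)
  let word (w : Fin N → Bool) : ℤ → Bool :=
    Function.extend (fun i : Fin N => (i : ℤ)) w fun _ => false
  have hcard := card_le_sepNum (f := combShift) (K := K) (n := N) (r := a / 8)
    (fun E hE => card_le_of_isOrbitSeparated cantorComb_subset_Icc lipschitzWith_combShift
      (by norm_num) (by positivity) hE) (by positivity)
    (fun w => ⟨combPoint a (word w), combPoint_mem_cantorComb ha _⟩) (fun w => hK _) ?_
  · simpa using hcard
  intro w v hwv
  obtain ⟨i, hi⟩ := Function.ne_iff.mp hwv
  refine ⟨i, i.2, ?_⟩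
  have hdiff : twoSidedShift i (word w) 0 ≠ twoSidedShift i (word v) 0 := by
    simpa [twoSidedShift, word, hcast.extend_apply] using hi
  have hdist := mul_abs_biCode_sub_le ha0.le a (twoSidedShift i (word w)) (twoSidedShift i (word v))
  have hcode := mul_le_mul_of_nonneg_left (inv_three_le_abs_biCode_sub hdiff) ha0.le
  rw [iterate_combShift, Subtype.dist_eq, coe_combShiftMap_mk, coe_combShiftMap_mk]
  linarith

lemma combPoint_mem_orbitNbd {a ε : ℝ} (ha : a ∈ combSlices) (haε : a ≤ ε) (s : ℤ → Bool) :
    ⟨combPoint a s, combPoint_mem_cantorComb ha s⟩ ∈ {y : cantorComb | ∀ i : ℤ,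
      ziter combShift i y ∈ nbd ε ({⟨(0, 0), zero_mem_cantorComb⟩} : Set cantorComb)} := by
  intro i
  change infDist _ _ ≤ ε
  rw [ziter_combShift, infDist_singleton, Subtype.dist_eq,
    coe_combShiftMap_mk, dist_combPoint_zero (combSlices_subset_Icc ha).1]
  exact haε

lemma log_two_le_htop_combShift {ε : ℝ} (hε : 0 < ε) :
    Real.log 2 ≤ htop combShift {y : cantorComb | ∀ i : ℤ,
      ziter combShift i y ∈ nbd ε ({⟨(0, 0), zero_mem_cantorComb⟩} : Set cantorComb)} := by
  obtain ⟨n, hn⟩ := exists_nat_one_div_lt hε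
  set a : ℝ := ((n : ℝ) + 1)⁻¹
  have ha : a ∈ combSlices := mem_insert_of_mem _ ⟨n, rfl⟩
  have ha0 : 0 < a := by positivity
  have haε : a ≤ ε := by simpa [a, one_div] using hn.le
  calc Real.log 2 ≤ entAt combShift _ (a / 8) := by
        exact_mod_cast log_le_entAt two_pos
          (isBoundedUnder_log_sepNum cantorComb_subset_Icc lipschitzWith_combShift (by norm_num)
            (by positivity))
          (two_pow_le_sepNum_combShift ha ha0 (combPoint_mem_orbitNbd ha haε))
    _ ≤ _ := entAt_le_htop (fun r hr => entAt_le_two_mul_log cantorComb_subset_Icc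
        lipschitzWith_combShift (by norm_num) hr) (by positivity)

theorem stmt_17 :
    ∃ (Xs : Set (ℝ × ℝ)), Xs ⊆ Set.Icc ((0 : ℝ), (0 : ℝ)) (1, 1) ∧ IsCompact Xs ∧
      ∃ (h0 : ((0 : ℝ), (0 : ℝ)) ∈ Xs) (f : Xs ≃ₜ Xs),
        f ⟨((0 : ℝ), (0 : ℝ)), h0⟩ = ⟨((0 : ℝ), (0 : ℝ)), h0⟩ ∧
        (∃ e > 0, ExpConstOn f ({⟨((0 : ℝ), (0 : ℝ)), h0⟩} : Set Xs) e) ∧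
        (∀ ε > 0, Real.log 2 ≤
          htop ⇑f {y : Xs | ∀ i : ℤ, ziter f i y ∈ nbd ε ({⟨((0 : ℝ), (0 : ℝ)), h0⟩} : Set Xs)}) ∧
        SenOn ⇑f ({⟨((0 : ℝ), (0 : ℝ)), h0⟩} : Set Xs) = ∅ :=
  ⟨cantorComb, cantorComb_subset_Icc, isCompact_cantorComb, zero_mem_cantorComb, combShift,
    combShift_zero, ⟨1, one_pos, expConstOn_singleton _ _ _⟩, fun _ => log_two_le_htop_combShift,
    senOn_singleton _ _⟩
end
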